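/- arXiv:0906.3359 — 4 statements merged into one kernel-verified Lean document; each statement's English description precedes it below -/
import Mathlib

section
/- Let L > 0. For every ψ ∈ C_c^∞(Ω₀): ∫_{Ω₀} (1+x₁²)^{−1} |ψ(x)|² dx ≤ 16 ∫_{Ω₀} |∂₁ψ(x)|² dx + (2 + 16/L²) ∫_{(−L,L)×ω} |ψ(x)|² dx. -/
open MeasureTheory Real Set Filter

noncomputable section

/-- First partial derivative ∂₁ of a function on ℝ³ = ℝ × ℝ × ℝ. -/
def pd1 {E : Type*} [NormedAddCommGroup E] [NormedSpace ℝ E]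
    (ψ : ℝ × ℝ × ℝ → E) (x : ℝ × ℝ × ℝ) : E :=
  deriv (fun t => ψ (t, x.2.1, x.2.2)) x.1

/-- Second partial derivative ∂₂. -/
def pd2 {E : Type*} [NormedAddCommGroup E] [NormedSpace ℝ E]
    (ψ : ℝ × ℝ × ℝ → E) (x : ℝ × ℝ × ℝ) : E :=
  deriv (fun t => ψ (x.1, t, x.2.2)) x.2.1

/-- Third partial derivative ∂₃. -/
def pd3 {E : Type*} [NormedAddCommGroup E] [NormedSpace ℝ E]
    (ψ : ℝ × ℝ × ℝ → E) (x : ℝ × ℝ × ℝ) : E :=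
  deriv (fun t => ψ (x.1, x.2.1, t)) x.2.2

/-- Transverse angular derivative ∂_τ = x₃∂₂ − x₂∂₃. -/
def pdtau {E : Type*} [NormedAddCommGroup E] [NormedSpace ℝ E]
    (ψ : ℝ × ℝ × ℝ → E) (x : ℝ × ℝ × ℝ) : E :=
  x.2.2 • pd2 ψ x - x.2.1 • pd3 ψ x

/-- The straight tube Ω₀ = ℝ × ω. -/
def Omega0 (ω : Set (ℝ × ℝ)) : Set (ℝ × ℝ × ℝ) := {x | x.2 ∈ ω}

/-- Smooth compactly supported test functions with support in Ω (i.e. C_c^∞(Ω)). -/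
def IsTest3 {E : Type*} [NormedAddCommGroup E] [NormedSpace ℝ E]
    (Ω : Set (ℝ × ℝ × ℝ)) (ψ : ℝ × ℝ × ℝ → E) : Prop :=
  ContDiff ℝ (⊤ : ℕ∞) ψ ∧ HasCompactSupport ψ ∧ tsupport ψ ⊆ Ω

/-- Partial derivatives on ℝ². -/
def pd1' (f : ℝ × ℝ → ℂ) (p : ℝ × ℝ) : ℂ := deriv (fun t => f (t, p.2)) p.1

def pd2' (f : ℝ × ℝ → ℂ) (p : ℝ × ℝ) : ℂ := deriv (fun t => f (p.1, t)) p.2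

/-- Smooth compactly supported test functions on the cross-section, C_c^∞(ω). -/
def IsTest2 (ω : Set (ℝ × ℝ)) (f : ℝ × ℝ → ℂ) : Prop :=
  ContDiff ℝ (⊤ : ℕ∞) f ∧ HasCompactSupport f ∧ tsupport f ⊆ ω

/-- The lowest Dirichlet eigenvalue E₁ of −Δ on ω, defined variationally. -/
def E1 (ω : Set (ℝ × ℝ)) : ℝ :=
  sInf { r : ℝ | ∃ f : ℝ × ℝ → ℂ, IsTest2 ω f ∧ f ≠ 0 ∧
    r = (∫ p in ω, (‖pd1' f p‖ ^ 2 + ‖pd2' f p‖ ^ 2)) / ∫ p in ω, ‖f p‖ ^ 2 }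

/-- The twisted quadratic form Q_θ[ψ] = ∫_{Ω₀} (|∂₁ψ − θ̇ ∂_τψ|² + |∇'ψ|²). -/
def Qform (θ : ℝ → ℝ) (ω : Set (ℝ × ℝ)) (ψ : ℝ × ℝ × ℝ → ℂ) : ℝ :=
  ∫ x in Omega0 ω,
    (‖pd1 ψ x - deriv θ x.1 • pdtau ψ x‖ ^ 2 + ‖pd2 ψ x‖ ^ 2 + ‖pd3 ψ x‖ ^ 2)

/-- Rotation of the plane by angle ϑ about the origin. -/
def rot (ϑ : ℝ) (p : ℝ × ℝ) : ℝ × ℝ :=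
  (p.1 * Real.cos ϑ + p.2 * Real.sin ϑ, -p.1 * Real.sin ϑ + p.2 * Real.cos ϑ)

/-- The tube is twisted: θ is not constant and ω is not rotationally symmetric about
the origin (in the strong sense: some rotated copy of ω differs from ω on a set of
positive Lebesgue measure). -/
def Twisted (θ : ℝ → ℝ) (ω : Set (ℝ × ℝ)) : Prop :=
  (∃ s t : ℝ, θ s ≠ θ t) ∧
  (∃ ϑ ∈ Set.Ioo (0 : ℝ) (2 * Real.pi), volume (symmDiff (rot ϑ '' ω) ω) ≠ 0)

/-- The tube is untwisted: θ is constant or ω is invariant under every rotation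
about the origin. -/
def Untwisted (θ : ℝ → ℝ) (ω : Set (ℝ × ℝ)) : Prop :=
  (∀ s t : ℝ, θ s = θ t) ∨ (∀ ϑ : ℝ, rot ϑ '' ω = ω)

lemma right_piece (f : ℝ → ℝ) (hf : ContDiff ℝ (⊤ : ℕ∞) f) {L b : ℝ} (hL : 0 < L) (hb : L ≤ b)
    (hfb : f b = 0) :
    ∫ x in L..b, (f x)^2 / x^2 ≤
      (3/L^2) * (∫ x in (0:ℝ)..L, (f x)^2) + 4 * ∫ x in (0:ℝ)..b, (deriv f x)^2 := by
  have hfc : Continuous f := hf.continuous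
  have hf'c : Continuous (deriv f) := hf.continuous_deriv (by simp)
  have hd : ∀ x : ℝ, HasDerivAt f (deriv f x) x :=
    fun x => (hf.differentiable (by simp) x).hasDerivAt
  have hL2 : (0:ℝ) < L^2 := by positivity
  -- interval integrability facts
  have iiC : IntervalIntegrable (fun x => (f x)^2) volume 0 L :=
    (hfc.pow 2).intervalIntegrable _ _
  have iiD : IntervalIntegrable (fun x => (deriv f x)^2) volume 0 L :=
    (hf'c.pow 2).intervalIntegrable _ _
  have iiB : IntervalIntegrable (fun x => (deriv f x)^2) volume L b :=
    (hf'c.pow 2).intervalIntegrable _ _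
  have hxne : ∀ x ∈ Set.uIcc L b, x ≠ 0 := by
    intro x hx
    rw [Set.uIcc_of_le hb] at hx
    exact ne_of_gt (lt_of_lt_of_le hL hx.1)
  have contOn_inv : ContinuousOn (fun x : ℝ => (f x)^2 / x^2) (Set.uIcc L b) :=
    ((hfc.pow 2).continuousOn).div ((continuous_pow 2).continuousOn)
      (fun x hx => pow_ne_zero _ (hxne x hx))
  have iiA : IntervalIntegrable (fun x => (f x)^2 / x^2) volume L b :=
    contOn_inv.intervalIntegrable
  have contOn_G : ContinuousOn (fun x : ℝ => 2 * f x * deriv f x / x) (Set.uIcc L b) :=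
    ((continuous_const.mul hfc).mul hf'c).continuousOn.div continuous_id.continuousOn hxne
  have iiG : IntervalIntegrable (fun x => 2 * f x * deriv f x / x) volume L b :=
    contOn_G.intervalIntegrable
  have iiE : IntervalIntegrable (fun x => 2 * x * f x * deriv f x / L^2) volume 0 L :=
    ((((continuous_const.mul continuous_id).mul hfc).mul hf'c).div_const _).intervalIntegrable _ _
  -- FTC on [0, L]
  have ftc1 : ∫ x in (0:ℝ)..L, ((f x)^2/L^2 + 2 * x * f x * deriv f x / L^2)
      = (f L)^2 / L := by
    have h1 : ∀ x ∈ Set.uIcc (0:ℝ) L,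
        HasDerivAt (fun y => y * (f y)^2 / L^2)
          ((f x)^2/L^2 + 2 * x * f x * deriv f x / L^2) x := by
      intro x _
      have := ((hasDerivAt_id x).mul ((hd x).pow 2)).div_const (L^2)
      refine this.congr_deriv ?_
      simp
      ring
    have h2 : IntervalIntegrable (fun x => (f x)^2/L^2 + 2 * x * f x * deriv f x / L^2)
        volume 0 L := ((iiC.div_const _).add iiE)
    rw [intervalIntegral.integral_eq_sub_of_hasDerivAt h1 h2]
    field_simp
    ring
  -- FTC on [L, b]
  have ftc2 : ∫ x in L..b, (2 * f x * deriv f x / x - (f x)^2 / x^2) = - ((f L)^2 / L) := by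
    have h1 : ∀ x ∈ Set.uIcc L b,
        HasDerivAt (fun y => (f y)^2 / y)
          (2 * f x * deriv f x / x - (f x)^2 / x^2) x := by
      intro x hx
      have hx0 : x ≠ 0 := hxne x hx
      have := ((hd x).pow 2).div (hasDerivAt_id x) hx0
      refine this.congr_deriv ?_
      simp only [id, Pi.pow_apply]
      field_simp
      ring
    have h2 : IntervalIntegrable (fun x => 2 * f x * deriv f x / x - (f x)^2 / x^2)
        volume L b := iiG.sub iiA
    rw [intervalIntegral.integral_eq_sub_of_hasDerivAt h1 h2, hfb]
    simp
  -- pointwise bounds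
  have mono1 : ∫ x in (0:ℝ)..L, 2 * x * f x * deriv f x / L^2
      ≤ ∫ x in (0:ℝ)..L, ((2*L^2)⁻¹ * (f x)^2 + 2 * (deriv f x)^2) := by
    apply intervalIntegral.integral_mono_on hL.le iiE
      ((iiC.const_mul _).add (iiD.const_mul 2))
    intro x hx
    have h1 : 0 ≤ x := hx.1
    have h2 : x ≤ L := hx.2
    have e1 : (2*L^2)⁻¹ * (f x)^2 + 2 * (deriv f x)^2
        = ((f x)^2/2 + 2 * (deriv f x)^2 * L^2) / L^2 := by
      field_simp
    rw [e1]
    gcongr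
    nlinarith [sq_nonneg (f x - 2 * x * deriv f x),
      mul_nonneg (mul_nonneg (sub_nonneg.2 h2) (by linarith : (0:ℝ) ≤ L + x))
        (sq_nonneg (deriv f x))]
  have mono2 : ∫ x in L..b, 2 * f x * deriv f x / x
      ≤ ∫ x in L..b, ((1/2) * ((f x)^2 / x^2) + 2 * (deriv f x)^2) := by
    apply intervalIntegral.integral_mono_on hb iiG
      ((iiA.const_mul _).add (iiB.const_mul 2))
    intro x hx
    have hx0 : (0:ℝ) < x := lt_of_lt_of_le hL hx.1
    have e2 : (1/2) * ((f x)^2 / x^2) + 2 * (deriv f x)^2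
        = ((f x)^2/2 + 2 * (deriv f x)^2 * x^2) / x^2 := by
      field_simp
    have e3 : 2 * f x * deriv f x / x = 2 * f x * deriv f x * x / x^2 := by
      field_simp
    rw [e2, e3]
    gcongr
    nlinarith [sq_nonneg (f x - 2 * x * deriv f x)]
  -- assemble
  have split1 : ∫ x in (0:ℝ)..L, ((f x)^2/L^2 + 2 * x * f x * deriv f x / L^2)
      = (∫ x in (0:ℝ)..L, (f x)^2) / L^2 + ∫ x in (0:ℝ)..L, 2 * x * f x * deriv f x / L^2 := by
    rw [intervalIntegral.integral_add (iiC.div_const _) iiE,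
      intervalIntegral.integral_div]
  have split2 : ∫ x in L..b, (2 * f x * deriv f x / x - (f x)^2 / x^2)
      = (∫ x in L..b, 2 * f x * deriv f x / x) - ∫ x in L..b, (f x)^2 / x^2 := by
    rw [intervalIntegral.integral_sub iiG iiA]
  have split3 : ∫ x in (0:ℝ)..L, ((2*L^2)⁻¹ * (f x)^2 + 2 * (deriv f x)^2)
      = (2*L^2)⁻¹ * (∫ x in (0:ℝ)..L, (f x)^2) + 2 * ∫ x in (0:ℝ)..L, (deriv f x)^2 := by
    rw [intervalIntegral.integral_add (iiC.const_mul _) (iiD.const_mul 2),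
      intervalIntegral.integral_const_mul, intervalIntegral.integral_const_mul]
  have split4 : ∫ x in L..b, ((1/2) * ((f x)^2 / x^2) + 2 * (deriv f x)^2)
      = (1/2) * (∫ x in L..b, (f x)^2 / x^2) + 2 * ∫ x in L..b, (deriv f x)^2 := by
    rw [intervalIntegral.integral_add (iiA.const_mul _) (iiB.const_mul 2),
      intervalIntegral.integral_const_mul, intervalIntegral.integral_const_mul]
  have adj : (∫ x in (0:ℝ)..L, (deriv f x)^2) + ∫ x in L..b, (deriv f x)^2
      = ∫ x in (0:ℝ)..b, (deriv f x)^2 :=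
    intervalIntegral.integral_add_adjacent_intervals iiD iiB
  set A := ∫ x in L..b, (f x)^2 / x^2
  set B := ∫ x in L..b, (deriv f x)^2
  set C := ∫ x in (0:ℝ)..L, (f x)^2
  set D := ∫ x in (0:ℝ)..L, (deriv f x)^2
  set E := ∫ x in (0:ℝ)..L, 2 * x * f x * deriv f x / L^2
  set G := ∫ x in L..b, 2 * f x * deriv f x / x
  rw [split1] at ftc1
  rw [split2] at ftc2
  rw [split3] at mono1
  rw [split4] at mono2
  -- A = G + C/L² + E ; E ≤ C/(2L²) + 2D ; G ≤ A/2 + 2B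
  have hCL : C / L^2 = (1/L^2) * C := by ring
  have hinv : (2*L^2)⁻¹ * C = C/(2*L^2) := by ring
  have final : A ≤ 3/L^2 * C + 4 * (D + B) := by
    have h1 : A = G + C / L^2 + E := by linarith
    have h2 : E ≤ C/(2*L^2) + 2*D := by rw [hinv] at mono1; linarith
    have hc : C/(2*L^2) = (1/2) * (C/L^2) := by ring
    have h5 : 3/L^2 * C = 3 * (C/L^2) := by ring
    linarith [mono2]
  rw [← adj]
  linarith [final]

lemma hardy1d_real (f : ℝ → ℝ) (hf : ContDiff ℝ (⊤ : ℕ∞) f) (hc : HasCompactSupport f)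
    {L : ℝ} (hL : 0 < L) :
    ∫ x : ℝ, (1 + x^2)⁻¹ * (f x)^2 ≤
      4 * (∫ x : ℝ, (deriv f x)^2) + (1 + 3/L^2) * ∫ x in Set.Ioo (-L) L, (f x)^2 := by
  have hfc : Continuous f := hf.continuous
  have hf'c : Continuous (deriv f) := hf.continuous_deriv (by simp)
  -- choose b
  obtain ⟨R, hR⟩ := hc.isBounded.subset_closedBall 0
  set b : ℝ := max L (|R| + 1) with hbdef
  have hbL : L ≤ b := le_max_left _ _
  have hb0 : 0 < b := lt_of_lt_of_le hL hbL
  have hzero : ∀ x : ℝ, b ≤ |x| → f x = 0 := by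
    intro x hx
    apply image_eq_zero_of_notMem_tsupport
    intro hmem
    have := hR hmem
    rw [Metric.mem_closedBall, Real.dist_eq, sub_zero] at this
    have h1 : |R| + 1 ≤ b := le_max_right _ _
    have h2 : R ≤ |R| := le_abs_self R
    linarith
  have hfb : f b = 0 := hzero b (by rw [abs_of_pos hb0])
  have hzero' : ∀ x : ℝ, x ∉ Set.Ioc (-b) b → (1 + x^2)⁻¹ * (f x)^2 = 0 := by
    intro x hx
    have : f x = 0 := by
      apply hzero
      simp only [Set.mem_Ioc, not_and_or, not_lt, not_le] at hx
      rcases hx with h | h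
      · rw [abs_of_nonpos (by linarith)]; linarith
      · rw [abs_of_pos (lt_trans hb0 h)]; exact h.le
    rw [this]; ring
  have hnot : ∀ x : ℝ, x ∉ Set.Ioc (-b) b → b ≤ |x| := by
    intro x hx
    simp only [Set.mem_Ioc, not_and_or, not_lt, not_le] at hx
    rcases hx with h | h
    · rw [abs_of_nonpos (by linarith)]; linarith
    · rw [abs_of_pos (lt_trans hb0 h)]; exact h.le
  have hg : Continuous (fun x : ℝ => (1 + x^2)⁻¹ * (f x)^2) := by
    have h1 : Continuous (fun x : ℝ => 1 + x^2) := continuous_const.add (continuous_pow 2)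
    exact (h1.inv₀ (fun x => by positivity)).mul (hfc.pow 2)
  have iig : ∀ u v : ℝ, IntervalIntegrable (fun x => (1 + x^2)⁻¹ * (f x)^2) volume u v :=
    fun u v => hg.intervalIntegrable _ _
  have iif2 : ∀ u v : ℝ, IntervalIntegrable (fun x => (f x)^2) volume u v :=
    fun u v => (hfc.pow 2).intervalIntegrable _ _
  have iid2 : ∀ u v : ℝ, IntervalIntegrable (fun x => (deriv f x)^2) volume u v :=
    fun u v => (hf'c.pow 2).intervalIntegrable _ _
  -- reduce whole-line integrals to intervals
  have eq1 : ∫ x : ℝ, (1 + x^2)⁻¹ * (f x)^2 = ∫ x in (-b)..b, (1 + x^2)⁻¹ * (f x)^2 := by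
    rw [intervalIntegral.integral_of_le (by linarith : -b ≤ b)]
    exact (setIntegral_eq_integral_of_forall_compl_eq_zero hzero').symm
  have hzero'' : ∀ x : ℝ, x ∉ Set.Ioc (-b) b → (deriv f x)^2 = 0 := by
    intro x hx
    have hx' : x ∉ tsupport f := by
      intro hmem
      have := hR hmem
      rw [Metric.mem_closedBall, Real.dist_eq, sub_zero] at this
      have h1 : |R| + 1 ≤ b := le_max_right _ _
      have h2 : R ≤ |R| := le_abs_self R
      have := hnot x hx
      linarith
    have : deriv f x = 0 := by
      by_contra h
      exact hx' (support_deriv_subset h)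
    rw [this]; ring
  have eq2 : ∫ x : ℝ, (deriv f x)^2 = ∫ x in (-b)..b, (deriv f x)^2 := by
    rw [intervalIntegral.integral_of_le (by linarith : -b ≤ b)]
    exact (setIntegral_eq_integral_of_forall_compl_eq_zero hzero'').symm
  have eq3 : ∫ x in Set.Ioo (-L) L, (f x)^2 = ∫ x in (-L)..L, (f x)^2 := by
    rw [intervalIntegral.integral_of_le (by linarith : -L ≤ L),
      MeasureTheory.integral_Ioc_eq_integral_Ioo]
  -- splits
  have splitg : ∫ x in (-b)..b, (1 + x^2)⁻¹ * (f x)^2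
      = (∫ x in (-b)..(-L), (1 + x^2)⁻¹ * (f x)^2)
        + (∫ x in (-L)..L, (1 + x^2)⁻¹ * (f x)^2)
        + ∫ x in L..b, (1 + x^2)⁻¹ * (f x)^2 := by
    rw [intervalIntegral.integral_add_adjacent_intervals (iig _ _) (iig _ _),
      intervalIntegral.integral_add_adjacent_intervals (iig _ _) (iig _ _)]
  have splitd : ∫ x in (-b)..b, (deriv f x)^2
      = (∫ x in (-b)..(0:ℝ), (deriv f x)^2) + ∫ x in (0:ℝ)..b, (deriv f x)^2 :=
    (intervalIntegral.integral_add_adjacent_intervals (iid2 _ _) (iid2 _ _)).symm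
  have splitf : ∫ x in (-L)..L, (f x)^2
      = (∫ x in (-L)..(0:ℝ), (f x)^2) + ∫ x in (0:ℝ)..L, (f x)^2 :=
    (intervalIntegral.integral_add_adjacent_intervals (iif2 _ _) (iif2 _ _)).symm
  -- middle bound
  have hmid : ∫ x in (-L)..L, (1 + x^2)⁻¹ * (f x)^2 ≤ ∫ x in (-L)..L, (f x)^2 := by
    apply intervalIntegral.integral_mono_on (by linarith : -L ≤ L) (iig _ _) (iif2 _ _)
    intro x _
    have h1 : (1 + x^2)⁻¹ ≤ 1 := by
      rw [inv_le_one_iff₀]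
      right; nlinarith [sq_nonneg x]
    exact mul_le_of_le_one_left (sq_nonneg _) h1
  -- generic pointwise bound on [L, b]
  have hptw : ∀ (g : ℝ → ℝ) (x : ℝ), x ∈ Set.Icc L b →
      (1 + x^2)⁻¹ * (g x)^2 ≤ (g x)^2 / x^2 := by
    intro g x hx
    have hx0 : 0 < x := lt_of_lt_of_le hL hx.1
    have h1 : (1 + x^2)⁻¹ ≤ (x^2)⁻¹ := by
      apply inv_anti₀ (by positivity)
      nlinarith
    calc (1 + x^2)⁻¹ * (g x)^2 ≤ (x^2)⁻¹ * (g x)^2 :=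
          mul_le_mul_of_nonneg_right h1 (sq_nonneg _)
      _ = (g x)^2 / x^2 := by ring
  -- right piece
  have hgt : ContinuousOn (fun x : ℝ => (f x)^2 / x^2) (Set.uIcc L b) := by
    apply ((hfc.pow 2).continuousOn).div ((continuous_pow 2).continuousOn)
    intro x hx
    rw [Set.uIcc_of_le hbL] at hx
    exact pow_ne_zero _ (ne_of_gt (lt_of_lt_of_le hL hx.1))
  have hright : ∫ x in L..b, (1 + x^2)⁻¹ * (f x)^2
      ≤ (3/L^2) * (∫ x in (0:ℝ)..L, (f x)^2) + 4 * ∫ x in (0:ℝ)..b, (deriv f x)^2 := by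
    refine le_trans ?_ (right_piece f hf hL hbL hfb)
    exact intervalIntegral.integral_mono_on hbL (iig _ _) hgt.intervalIntegrable
      (hptw f)
  -- left piece via reflection
  set F : ℝ → ℝ := fun x => f (-x) with hFdef
  have hFsm : ContDiff ℝ (⊤ : ℕ∞) F := hf.comp (contDiff_id.neg)
  have hFc : Continuous F := hFsm.continuous
  have hFb : F b = 0 := hzero _ (by rw [abs_neg, abs_of_pos hb0])
  have hFgt : ContinuousOn (fun x : ℝ => (F x)^2 / x^2) (Set.uIcc L b) := by
    apply ((hFc.pow 2).continuousOn).div ((continuous_pow 2).continuousOn)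
    intro x hx
    rw [Set.uIcc_of_le hbL] at hx
    exact pow_ne_zero _ (ne_of_gt (lt_of_lt_of_le hL hx.1))
  have hleft0 : ∫ x in (-b)..(-L), (1 + x^2)⁻¹ * (f x)^2
      = ∫ x in L..b, (1 + x^2)⁻¹ * (F x)^2 := by
    rw [show (∫ x in L..b, (1 + x^2)⁻¹ * (F x)^2)
        = ∫ x in L..b, (fun y => (1 + y^2)⁻¹ * (f y)^2) (-x) from by
      apply intervalIntegral.integral_congr
      intro x _
      simp [hFdef, neg_sq]]
    rw [intervalIntegral.integral_comp_neg (fun y => (1 + y^2)⁻¹ * (f y)^2)]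
  have hFmono : ∫ x in L..b, (1 + x^2)⁻¹ * (F x)^2
      ≤ (3/L^2) * (∫ x in (0:ℝ)..L, (F x)^2) + 4 * ∫ x in (0:ℝ)..b, (deriv F x)^2 := by
    refine le_trans ?_ (right_piece F hFsm hL hbL hFb)
    apply intervalIntegral.integral_mono_on hbL
      ((((continuous_const.add (continuous_pow 2)).inv₀ (fun x : ℝ => (by positivity : (1:ℝ) + x^2 ≠ 0))).mul
        (hFc.pow 2)).intervalIntegrable _ _) hFgt.intervalIntegrable (hptw F)
  have hF1 : ∫ x in (0:ℝ)..L, (F x)^2 = ∫ x in (-L)..(0:ℝ), (f x)^2 := by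
    rw [show (∫ x in (0:ℝ)..L, (F x)^2) = ∫ x in (0:ℝ)..L, (fun y => (f y)^2) (-x) from by
      apply intervalIntegral.integral_congr; intro x _; simp [hFdef]]
    rw [intervalIntegral.integral_comp_neg (fun y => (f y)^2)]
    norm_num
  have hF2 : ∫ x in (0:ℝ)..b, (deriv F x)^2 = ∫ x in (-b)..(0:ℝ), (deriv f x)^2 := by
    rw [show (∫ x in (0:ℝ)..b, (deriv F x)^2)
        = ∫ x in (0:ℝ)..b, (fun y => (deriv f y)^2) (-x) from by
      apply intervalIntegral.integral_congr
      intro x _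
      simp only [hFdef, deriv_comp_neg, neg_sq]]
    rw [intervalIntegral.integral_comp_neg (fun y => (deriv f y)^2)]
    norm_num
  rw [eq1, eq2, eq3, splitg, splitd, splitf]
  rw [hleft0]
  have := hFmono
  rw [hF1, hF2] at this
  have hfinal := hright
  nlinarith [this, hfinal, hmid]

lemma hardy1d (u : ℝ → ℂ) (hu : ContDiff ℝ (⊤ : ℕ∞) u) (hc : HasCompactSupport u)
    {L : ℝ} (hL : 0 < L) :
    ∫ x : ℝ, (1 + x^2)⁻¹ * ‖u x‖^2 ≤
      16 * (∫ x : ℝ, ‖deriv u x‖^2) + (2 + 16/L^2) * ∫ x in Set.Ioo (-L) L, ‖u x‖^2 := by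
  have hnorm : ∀ z : ℂ, ‖z‖^2 = z.re^2 + z.im^2 := by
    intro z
    rw [Complex.sq_norm, Complex.normSq_apply]
    ring
  set fr : ℝ → ℝ := fun x => (u x).re with hfrdef
  set fi : ℝ → ℝ := fun x => (u x).im with hfidef
  have hfr : ContDiff ℝ (⊤ : ℕ∞) fr := Complex.reCLM.contDiff.comp hu
  have hfi : ContDiff ℝ (⊤ : ℕ∞) fi := Complex.imCLM.contDiff.comp hu
  have hcr : HasCompactSupport fr := hc.comp_left (g := Complex.re) rfl
  have hci : HasCompactSupport fi := hc.comp_left (g := Complex.im) rfl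
  have hdu : ∀ x, HasDerivAt u (deriv u x) x := fun x => (hu.differentiable (by simp) x).hasDerivAt
  have hdr : ∀ x, deriv fr x = (deriv u x).re := by
    intro x
    exact (Complex.reCLM.hasFDerivAt.comp_hasDerivAt x (hdu x)).deriv
  have hdi : ∀ x, deriv fi x = (deriv u x).im := by
    intro x
    exact (Complex.imCLM.hasFDerivAt.comp_hasDerivAt x (hdu x)).deriv
  have hr := hardy1d_real fr hfr hcr hL
  have hi := hardy1d_real fi hfi hci hL
  -- integrability for additivity
  have hfrc : Continuous fr := hfr.continuous
  have hfic : Continuous fi := hfi.continuous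
  have hw : Continuous (fun x : ℝ => (1 + x^2)⁻¹) :=
    (continuous_const.add (continuous_pow 2)).inv₀ (fun x : ℝ => (by positivity : (1:ℝ) + x^2 ≠ 0))
  have int1r : Integrable (fun x : ℝ => (1 + x^2)⁻¹ * (fr x)^2) := by
    apply (hw.mul (hfrc.pow 2)).integrable_of_hasCompactSupport
    have h2 : HasCompactSupport (fr ^ 2) := by rw [pow_two]; exact hcr.mul_left
    exact h2.mul_left
  have int1i : Integrable (fun x : ℝ => (1 + x^2)⁻¹ * (fi x)^2) := by
    apply (hw.mul (hfic.pow 2)).integrable_of_hasCompactSupport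
    have h2 : HasCompactSupport (fi ^ 2) := by rw [pow_two]; exact hci.mul_left
    exact h2.mul_left
  have hcd : HasCompactSupport (deriv u) := hc.deriv
  have hdc : Continuous (deriv u) := hu.continuous_deriv (by simp)
  have int2r : Integrable (fun x : ℝ => (deriv fr x)^2) := by
    have : (fun x : ℝ => (deriv fr x)^2) = fun x => ((deriv u x).re)^2 := by
      funext x; rw [hdr]
    rw [this]
    apply ((Complex.continuous_re.comp hdc).pow 2).integrable_of_hasCompactSupport
    have h1 := hcd.comp_left (g := Complex.re) rfl
    rw [pow_two]; exact h1.mul_left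
  have int2i : Integrable (fun x : ℝ => (deriv fi x)^2) := by
    have : (fun x : ℝ => (deriv fi x)^2) = fun x => ((deriv u x).im)^2 := by
      funext x; rw [hdi]
    rw [this]
    apply ((Complex.continuous_im.comp hdc).pow 2).integrable_of_hasCompactSupport
    have h1 := hcd.comp_left (g := Complex.im) rfl
    rw [pow_two]; exact h1.mul_left
  have int3r : IntegrableOn (fun x : ℝ => (fr x)^2) (Set.Ioo (-L) L) :=
    (((hfrc.pow 2).integrable_of_hasCompactSupport
      (by rw [pow_two]; exact hcr.mul_left)).restrict)
  have int3i : IntegrableOn (fun x : ℝ => (fi x)^2) (Set.Ioo (-L) L) :=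
    (((hfic.pow 2).integrable_of_hasCompactSupport
      (by rw [pow_two]; exact hci.mul_left)).restrict)
  -- rewrite the complex integrals as sums
  have e1 : ∫ x : ℝ, (1 + x^2)⁻¹ * ‖u x‖^2
      = (∫ x : ℝ, (1 + x^2)⁻¹ * (fr x)^2) + ∫ x : ℝ, (1 + x^2)⁻¹ * (fi x)^2 := by
    rw [← MeasureTheory.integral_add int1r int1i]
    congr 1
    funext x
    rw [hnorm]
    ring
  have e2 : ∫ x : ℝ, ‖deriv u x‖^2
      = (∫ x : ℝ, (deriv fr x)^2) + ∫ x : ℝ, (deriv fi x)^2 := by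
    rw [← MeasureTheory.integral_add int2r int2i]
    congr 1
    funext x
    rw [hnorm, hdr, hdi]
  have e3 : ∫ x in Set.Ioo (-L) L, ‖u x‖^2
      = (∫ x in Set.Ioo (-L) L, (fr x)^2) + ∫ x in Set.Ioo (-L) L, (fi x)^2 := by
    rw [← MeasureTheory.integral_add int3r int3i]
    congr 1
    funext x
    rw [hnorm]
  rw [e1, e2, e3]
  -- nonnegativity
  have n1 : 0 ≤ ∫ x : ℝ, (deriv fr x)^2 := integral_nonneg (fun x => sq_nonneg _)
  have n2 : 0 ≤ ∫ x : ℝ, (deriv fi x)^2 := integral_nonneg (fun x => sq_nonneg _)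
  have n3 : 0 ≤ ∫ x in Set.Ioo (-L) L, (fr x)^2 :=
    setIntegral_nonneg measurableSet_Ioo (fun x _ => sq_nonneg _)
  have n4 : 0 ≤ ∫ x in Set.Ioo (-L) L, (fi x)^2 :=
    setIntegral_nonneg measurableSet_Ioo (fun x _ => sq_nonneg _)
  have hL2 : 0 < L^2 := by positivity
  have hcoef : 1 + 3/L^2 ≤ 2 + 16/L^2 := by
    have h1 : 3/L^2 ≤ 16/L^2 := by gcongr <;> norm_num
    linarith
  have m3 : (1 + 3/L^2) * (∫ x in Set.Ioo (-L) L, (fr x)^2)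
      ≤ (2 + 16/L^2) * ∫ x in Set.Ioo (-L) L, (fr x)^2 :=
    mul_le_mul_of_nonneg_right hcoef n3
  have m4 : (1 + 3/L^2) * (∫ x in Set.Ioo (-L) L, (fi x)^2)
      ≤ (2 + 16/L^2) * ∫ x in Set.Ioo (-L) L, (fi x)^2 :=
    mul_le_mul_of_nonneg_right hcoef n4
  linarith [hr, hi]

lemma restrict_prod_eq_volume (s : Set ℝ) (ω : Set (ℝ × ℝ)) :
    ((volume : Measure ℝ).restrict s).prod ((volume : Measure (ℝ × ℝ)).restrict ω)
      = (volume : Measure (ℝ × ℝ × ℝ)).restrict (s ×ˢ ω) := by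
  rw [Measure.prod_restrict, ← Measure.volume_eq_prod]

lemma fubini_prod_slice (F : ℝ × ℝ × ℝ → ℝ) (hF : Integrable F (volume : Measure (ℝ × ℝ × ℝ)))
    (s : Set ℝ) (ω : Set (ℝ × ℝ)) :
    ∫ x in s ×ˢ ω, F x = ∫ p in ω, ∫ t in s, F (t, p) := by
  have hFi : Integrable F
      (((volume : Measure ℝ).restrict s).prod ((volume : Measure (ℝ × ℝ)).restrict ω)) := by
    rw [restrict_prod_eq_volume]
    exact hF.restrict
  calc ∫ x in s ×ˢ ω, F x
      = ∫ x, F x ∂(((volume : Measure ℝ).restrict s).prod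
          ((volume : Measure (ℝ × ℝ)).restrict ω)) := by rw [restrict_prod_eq_volume]
    _ = ∫ p in ω, ∫ t in s, F (t, p) := MeasureTheory.integral_prod_symm F hFi

lemma fubini_marginal (F : ℝ × ℝ × ℝ → ℝ) (hF : Integrable F (volume : Measure (ℝ × ℝ × ℝ)))
    (s : Set ℝ) (ω : Set (ℝ × ℝ)) :
    Integrable (fun p => ∫ t in s, F (t, p)) ((volume : Measure (ℝ × ℝ)).restrict ω) := by
  have hFi : Integrable F
      (((volume : Measure ℝ).restrict s).prod ((volume : Measure (ℝ × ℝ)).restrict ω)) := by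
    rw [restrict_prod_eq_volume]
    exact hF.restrict
  exact hFi.integral_prod_right

set_option maxHeartbeats 2000000 in
/-- the Hardy-type inequality with a characteristic-function potential:
∫ (1+x₁²)⁻¹|ψ|² ≤ 16 ∫ |∂₁ψ|² + (2 + 16/L²) ∫_{(−L,L)×ω} |ψ|². -/
theorem hardy_characteristic_potential
    (ω : Set (ℝ × ℝ)) (hω_open : IsOpen ω) (hω_bdd : Bornology.IsBounded ω)
    (hω_conn : IsConnected ω)
    (L : ℝ) (hL : 0 < L)
    (ψ : ℝ × ℝ × ℝ → ℂ) (hψ : IsTest3 (Omega0 ω) ψ) :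
    ∫ x in Omega0 ω, (1 + x.1 ^ 2)⁻¹ * ‖ψ x‖ ^ 2
      ≤ 16 * (∫ x in Omega0 ω, ‖pd1 ψ x‖ ^ 2)
        + (2 + 16 / L ^ 2) * ∫ x in (Set.Ioo (-L) L) ×ˢ ω, ‖ψ x‖ ^ 2 := by
  obtain ⟨hsm, hcs, -⟩ := hψ
  have hψc : Continuous ψ := hsm.continuous
  -- pd1 as an application of the Fréchet derivative
  have hdslice : ∀ x : ℝ × ℝ × ℝ,
      HasDerivAt (fun t => ψ (t, x.2.1, x.2.2)) (fderiv ℝ ψ x ((1:ℝ), (0:ℝ), (0:ℝ))) x.1 := by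
    intro x
    have h1 : HasDerivAt (fun t : ℝ => (t, x.2.1, x.2.2)) ((1:ℝ), (0:ℝ), (0:ℝ)) x.1 :=
      (hasDerivAt_id x.1).prodMk (hasDerivAt_const _ _)
    exact ((hsm.differentiable (by simp) x).hasFDerivAt).comp_hasDerivAt x.1 h1
  have key : pd1 ψ = fun x => fderiv ℝ ψ x ((1:ℝ), (0:ℝ), (0:ℝ)) := by
    funext x
    exact (hdslice x).deriv
  have hpd1cont : Continuous (pd1 ψ) := by
    rw [key]
    exact (hsm.continuous_fderiv (by simp)).clm_apply continuous_const
  have hpd1supp : HasCompactSupport (pd1 ψ) := by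
    rw [key]
    exact hcs.fderiv_apply ℝ ((1:ℝ), (0:ℝ), (0:ℝ))
  -- the three integrands
  set F0 : ℝ × ℝ × ℝ → ℝ := fun x => (1 + x.1 ^ 2)⁻¹ * ‖ψ x‖ ^ 2 with hF0def
  set F1 : ℝ × ℝ × ℝ → ℝ := fun x => ‖pd1 ψ x‖ ^ 2 with hF1def
  set F2 : ℝ × ℝ × ℝ → ℝ := fun x => ‖ψ x‖ ^ 2 with hF2def
  have hsupp2 : HasCompactSupport F2 :=
    hcs.comp_left (g := fun z : ℂ => ‖z‖ ^ 2) (by simp)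
  have hcont2 : Continuous F2 := (hψc.norm.pow 2)
  have hF2i : Integrable F2 (volume : Measure (ℝ × ℝ × ℝ)) :=
    hcont2.integrable_of_hasCompactSupport hsupp2
  have hF0i : Integrable F0 (volume : Measure (ℝ × ℝ × ℝ)) := by
    have hwc : Continuous (fun x : ℝ × ℝ × ℝ => (1 + x.1 ^ 2)⁻¹) :=
      (continuous_const.add (continuous_fst.pow 2)).inv₀ (fun x : ℝ × ℝ × ℝ => (by positivity : (1:ℝ) + x.1 ^ 2 ≠ 0))
    exact (hwc.mul hcont2).integrable_of_hasCompactSupport hsupp2.mul_left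
  have hF1i : Integrable F1 (volume : Measure (ℝ × ℝ × ℝ)) :=
    (hpd1cont.norm.pow 2).integrable_of_hasCompactSupport
      (by have h := hpd1supp.comp_left (g := fun z : ℂ => ‖z‖ ^ 2) (by simp); exact h)
  -- rewrite Omega0 as a product
  have hOmega : Omega0 ω = (Set.univ : Set ℝ) ×ˢ ω := by
    ext x
    simp [Omega0, Set.mem_prod]
  -- Fubini
  have fub0 : ∫ x in Omega0 ω, F0 x = ∫ p in ω, ∫ t, F0 (t, p) := by
    rw [hOmega, fubini_prod_slice F0 hF0i Set.univ ω]
    simp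
  have fub1 : ∫ x in Omega0 ω, F1 x = ∫ p in ω, ∫ t, F1 (t, p) := by
    rw [hOmega, fubini_prod_slice F1 hF1i Set.univ ω]
    simp
  have fub2 : ∫ x in (Set.Ioo (-L) L) ×ˢ ω, F2 x
      = ∫ p in ω, ∫ t in Set.Ioo (-L) L, F2 (t, p) :=
    fubini_prod_slice F2 hF2i _ ω
  -- marginal integrability
  have hi0 : Integrable (fun p => ∫ t, F0 (t, p)) ((volume : Measure (ℝ × ℝ)).restrict ω) := by
    have := fubini_marginal F0 hF0i Set.univ ω
    simpa using this
  have hi1 : Integrable (fun p => ∫ t, F1 (t, p)) ((volume : Measure (ℝ × ℝ)).restrict ω) := by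
    have := fubini_marginal F1 hF1i Set.univ ω
    simpa using this
  have hi2 : Integrable (fun p => ∫ t in Set.Ioo (-L) L, F2 (t, p))
      ((volume : Measure (ℝ × ℝ)).restrict ω) := fubini_marginal F2 hF2i _ ω
  -- per-slice one-dimensional Hardy inequality
  have slice : ∀ p : ℝ × ℝ,
      (∫ t, F0 (t, p)) ≤ 16 * (∫ t, F1 (t, p))
        + (2 + 16 / L ^ 2) * ∫ t in Set.Ioo (-L) L, F2 (t, p) := by
    intro p
    set u : ℝ → ℂ := fun t => ψ (t, p.1, p.2) with hudef
    have hu : ContDiff ℝ (⊤ : ℕ∞) u := hsm.comp ((contDiff_id.prodMk contDiff_const))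
    have hcu : HasCompactSupport u := by
      obtain ⟨R, hR⟩ := hcs.isBounded.subset_closedBall 0
      apply HasCompactSupport.intro (isCompact_Icc (a := -(|R| + 1)) (b := |R| + 1))
      intro t ht
      show ψ (t, p.1, p.2) = 0
      apply image_eq_zero_of_notMem_tsupport (f := ψ)
      intro hmem
      have h2 := hR hmem
      rw [Metric.mem_closedBall, dist_zero_right] at h2
      have h3 : ‖t‖ ≤ ‖((t, p.1, p.2) : ℝ × ℝ × ℝ)‖ := norm_fst_le ((t, p.1, p.2) : ℝ × ℝ × ℝ)
      rw [Real.norm_eq_abs] at h3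
      have h4 : R ≤ |R| := le_abs_self R
      simp only [Set.mem_Icc, not_and_or, not_le] at ht
      rcases ht with h | h
      · have := neg_le_abs t
        linarith
      · have := le_abs_self t
        linarith
    have hder : ∀ t, deriv u t = pd1 ψ (t, p.1, p.2) := fun t => rfl
    exact hardy1d u hu hcu hL
  rw [fub0, fub1, fub2]
  have hmono := integral_mono hi0 ((hi1.const_mul 16).add (hi2.const_mul (2 + 16 / L ^ 2))) slice
  have heq : ∫ p in ω, (16 * (∫ t, F1 (t, p))
        + (2 + 16 / L ^ 2) * ∫ t in Set.Ioo (-L) L, F2 (t, p))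
      = 16 * (∫ p in ω, ∫ t, F1 (t, p))
        + (2 + 16 / L ^ 2) * ∫ p in ω, ∫ t in Set.Ioo (-L) L, F2 (t, p) := by
    rw [MeasureTheory.integral_add (hi1.const_mul 16) (hi2.const_mul _),
      MeasureTheory.integral_const_mul, MeasureTheory.integral_const_mul]
  exact le_trans hmono (le_of_eq heq)
end
end

section
/- Let K(y₁) := e^{y₁²/4}. For every v ∈ C_c^∞(Ω₀): ∫_{Ω₀} y₁² |v(y)|² K(y₁) dy ≤ 16 ∫_{Ω₀} |∂₁v(y)|² K(y₁) dy. -/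
open MeasureTheory Real Set Filter

noncomputable section

lemma norm_sq_complex (z : ℂ) : ‖z‖ ^ 2 = z.re ^ 2 + z.im ^ 2 := by
  rw [Complex.sq_norm, Complex.normSq_apply]; ring

lemma oneD_bound (g : ℝ → ℂ) (hg : ContDiff ℝ (⊤ : ℕ∞) g) (hs : HasCompactSupport g) :
    ∫ t, t ^ 2 * ‖g t‖ ^ 2 * Real.exp (t ^ 2 / 4)
      ≤ 16 * ∫ t, ‖deriv g t‖ ^ 2 * Real.exp (t ^ 2 / 4) := by
  have hgd : Differentiable ℝ g := hg.differentiable (by simp)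
  set e : ℝ → ℝ := fun t => Real.exp (t ^ 2 / 4) with he
  set h : ℝ → ℝ := fun t => ‖g t‖ ^ 2 with hh
  set h' : ℝ → ℝ := fun t =>
    2 * ((g t).re * (deriv g t).re + (g t).im * (deriv g t).im) with hh'def
  -- derivative facts
  have hederiv : ∀ t : ℝ, HasDerivAt e (t / 2 * e t) t := by
    intro t
    have h1 : HasDerivAt (fun t : ℝ => t ^ 2 / 4) (t / 2) t := by
      have := (hasDerivAt_pow 2 t).div_const 4
      refine this.congr_deriv ?_; norm_num; ring
    have := h1.exp
    convert this using 1; ring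
  have hhderiv : ∀ t : ℝ, HasDerivAt h (h' t) t := by
    intro t
    have h1 : HasDerivAt (fun t => (g t).re) ((deriv g t).re) t :=
      Complex.reCLM.hasFDerivAt.comp_hasDerivAt t (hgd t).hasDerivAt
    have h2 : HasDerivAt (fun t => (g t).im) ((deriv g t).im) t :=
      Complex.imCLM.hasFDerivAt.comp_hasDerivAt t (hgd t).hasDerivAt
    have h3 : HasDerivAt (fun t => (g t).re ^ 2 + (g t).im ^ 2) (h' t) t := by
      have := (h1.pow 2).add (h2.pow 2)
      refine this.congr_deriv ?_
      norm_num [hh'def]; ring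
    have : h = fun t => (g t).re ^ 2 + (g t).im ^ 2 := by
      funext s; exact norm_sq_complex (g s)
    rw [this]; exact h3
  -- continuity facts
  have hce : Continuous e := Real.continuous_exp.comp ((continuous_pow 2).div_const 4)
  have hcg' : Continuous (deriv g) := hg.continuous_deriv (by simp)
  have hch : Continuous h := (hg.continuous.norm.pow 2)
  have hch' : Continuous h' := by
    apply Continuous.mul continuous_const
    exact ((Complex.continuous_re.comp hg.continuous).mul
      (Complex.continuous_re.comp hcg')).add
      ((Complex.continuous_im.comp hg.continuous).mul (Complex.continuous_im.comp hcg'))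
  -- compact support facts
  have hsh : HasCompactSupport h := hs.comp_left (g := fun z : ℂ => ‖z‖ ^ 2) (by simp)
  have hsh' : HasCompactSupport h' := by
    apply hs.mono'
    intro t ht
    by_contra hmem
    apply ht
    simp [hh'def, image_eq_zero_of_notMem_tsupport hmem]
  -- integrability of the pieces
  have int1 : Integrable (fun t => (1 + t ^ 2 / 2) * e t * h t) := by
    apply Continuous.integrable_of_hasCompactSupport
    · exact ((continuous_const.add ((continuous_pow 2).div_const 2)).mul hce).mul hch
    · exact (hsh.mul_left (f := fun t => (1 + t ^ 2 / 2) * e t))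
  have int2 : Integrable (fun t => t * e t * h' t) := by
    apply Continuous.integrable_of_hasCompactSupport
    · exact ((continuous_id.mul hce)).mul hch'
    · exact (hsh'.mul_left (f := fun t => t * e t))
  have intA : Integrable (fun t => t ^ 2 * ‖g t‖ ^ 2 * e t) := by
    apply Continuous.integrable_of_hasCompactSupport
    · exact (((continuous_pow 2).mul hch)).mul hce
    · exact (hsh.mul_left (f := fun t => t ^ 2)).mul_right
  have intB : Integrable (fun t => ‖deriv g t‖ ^ 2 * e t) := by
    apply Continuous.integrable_of_hasCompactSupport
    · exact (hcg'.norm.pow 2).mul hce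
    · have hsg' : HasCompactSupport (fun t => ‖deriv g t‖ ^ 2) :=
        (hs.deriv).comp_left (g := fun z : ℂ => ‖z‖ ^ 2) (by simp)
      exact hsg'.mul_right
  -- integration by parts: ∫ (F)' = 0 for F t = t * e t * h t
  have key : ∫ t, ((1 + t ^ 2 / 2) * e t * h t + t * e t * h' t) = 0 := by
    apply integral_eq_zero_of_hasDerivAt_of_integrable
      (f := fun t => t * e t * h t)
    · intro t
      have := (((hasDerivAt_id t).mul (hederiv t)).mul (hhderiv t))
      refine this.congr_deriv ?_
      simp only [id, Pi.mul_apply]; ring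
    · exact int1.add int2
    · apply Continuous.integrable_of_hasCompactSupport
      · exact ((continuous_id.mul hce)).mul hch
      · exact (hsh.mul_left (f := fun t => t * e t))
  have esplit : ∫ t, ((1 + t ^ 2 / 2) * e t * h t) = ∫ t, (-(t * e t * h' t)) := by
    have := integral_add int1 int2
    rw [key] at this
    rw [integral_neg]; linarith
  -- lower bound for LHS of esplit
  have lb : (1/2) * ∫ t, t ^ 2 * ‖g t‖ ^ 2 * e t ≤ ∫ t, ((1 + t ^ 2 / 2) * e t * h t) := by
    rw [← integral_const_mul]
    apply integral_mono (intA.const_mul _) int1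
    intro t
    have h1 : (0:ℝ) ≤ e t * ‖g t‖ ^ 2 := mul_nonneg (Real.exp_pos _).le (by positivity)
    show 1 / 2 * (t ^ 2 * ‖g t‖ ^ 2 * e t) ≤ (1 + t ^ 2 / 2) * e t * ‖g t‖ ^ 2
    nlinarith [mul_nonneg (sq_nonneg t) h1]
  -- upper bound for RHS of esplit
  have ub : ∫ t, (-(t * e t * h' t)) ≤
      ∫ t, ((1/4) * (t ^ 2 * ‖g t‖ ^ 2 * e t) + 4 * (‖deriv g t‖ ^ 2 * e t)) := by
    apply integral_mono int2.neg ((intA.const_mul _).add (intB.const_mul _))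
    intro t
    simp only [Pi.add_apply, Pi.neg_apply]
    have hept : (0:ℝ) < e t := Real.exp_pos _
    have hbase : -(t * h' t) ≤ t ^ 2 / 4 * ‖g t‖ ^ 2 + 4 * ‖deriv g t‖ ^ 2 := by
      rw [norm_sq_complex (g t), norm_sq_complex (deriv g t), hh'def]
      nlinarith [sq_nonneg (t * (g t).re / 2 + 2 * (deriv g t).re),
        sq_nonneg (t * (g t).im / 2 + 2 * (deriv g t).im)]
    nlinarith [mul_le_mul_of_nonneg_right hbase hept.le]
  rw [integral_add (intA.const_mul _) (intB.const_mul _), integral_const_mul,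
    integral_const_mul] at ub
  show ∫ t, t ^ 2 * ‖g t‖ ^ 2 * e t ≤ 16 * ∫ t, ‖deriv g t‖ ^ 2 * e t
  linarith

/-- the weighted bound ∫ y₁²|v|² K ≤ 16 ∫ |∂₁v|² K with the Gaussian
weight K(y₁) = e^{y₁²/4}, for every v ∈ C_c^∞(Ω₀). -/
theorem weighted_y1_bound
    (ω : Set (ℝ × ℝ)) (hω_open : IsOpen ω) (hω_bdd : Bornology.IsBounded ω)
    (hω_conn : IsConnected ω)
    (v : ℝ × ℝ × ℝ → ℂ) (hv : IsTest3 (Omega0 ω) v) :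
    ∫ y in Omega0 ω, y.1 ^ 2 * ‖v y‖ ^ 2 * Real.exp (y.1 ^ 2 / 4)
      ≤ 16 * ∫ y in Omega0 ω, ‖pd1 v y‖ ^ 2 * Real.exp (y.1 ^ 2 / 4) := by
  obtain ⟨hsm, hcs, hsub⟩ := hv
  have hvd : Differentiable ℝ v := hsm.differentiable (by simp)
  -- pd1 v as fderiv applied to (1,0,0)
  have hpd : ∀ x : ℝ × ℝ × ℝ, pd1 v x = fderiv ℝ v x (1, (0:ℝ), (0:ℝ)) := by
    intro x
    have hline : HasDerivAt (fun t : ℝ => ((t, x.2.1, x.2.2) : ℝ × ℝ × ℝ))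
        ((1:ℝ), (0:ℝ), (0:ℝ)) x.1 :=
      (hasDerivAt_id x.1).prodMk (hasDerivAt_const _ _)
    have hfd : HasFDerivAt v (fderiv ℝ v x) (x.1, x.2.1, x.2.2) := by
      simpa using (hvd (x.1, x.2.1, x.2.2)).hasFDerivAt
    have := hfd.comp_hasDerivAt x.1 hline
    exact this.deriv
  have hpd0 : ∀ x ∉ tsupport v, pd1 v x = 0 := by
    intro x hx
    rw [hpd x]
    have : fderiv ℝ v x = 0 := by
      by_contra hne
      exact hx (support_fderiv_subset ℝ (Function.mem_support.2 hne))
    simp [this]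
  have hpdc : Continuous (pd1 v) := by
    have : Continuous fun x => fderiv ℝ v x ((1:ℝ), (0:ℝ), (0:ℝ)) :=
      (hsm.continuous_fderiv (by simp)).clm_apply continuous_const
    simpa [funext hpd] using this
  have hpds : HasCompactSupport (pd1 v) :=
    hcs.mono' (fun x hx => by
      by_contra hmem
      exact hx (hpd0 x hmem))
  -- the two integrands on all of ℝ³
  set F₁ : ℝ × ℝ × ℝ → ℝ := fun y => y.1 ^ 2 * ‖v y‖ ^ 2 * Real.exp (y.1 ^ 2 / 4) with hF₁
  set F₂ : ℝ × ℝ × ℝ → ℝ := fun y => ‖pd1 v y‖ ^ 2 * Real.exp (y.1 ^ 2 / 4) with hF₂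
  have hexpc : Continuous fun y : ℝ × ℝ × ℝ => Real.exp (y.1 ^ 2 / 4) :=
    Real.continuous_exp.comp ((continuous_fst.pow 2).div_const 4)
  have hF₁c : Continuous F₁ := ((continuous_fst.pow 2).mul (hsm.continuous.norm.pow 2)).mul hexpc
  have hF₂c : Continuous F₂ := (hpdc.norm.pow 2).mul hexpc
  have hF₁s : HasCompactSupport F₁ := by
    have h0 : HasCompactSupport fun y => ‖v y‖ ^ 2 :=
      hcs.comp_left (g := fun z : ℂ => ‖z‖ ^ 2) (by simp)
    exact (h0.mul_left (f := fun y : ℝ × ℝ × ℝ => y.1 ^ 2)).mul_right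
  have hF₂s : HasCompactSupport F₂ := by
    have h0 : HasCompactSupport fun y => ‖pd1 v y‖ ^ 2 :=
      hpds.comp_left (g := fun z : ℂ => ‖z‖ ^ 2) (by simp)
    exact h0.mul_right
  have hiF₁ : Integrable F₁ := hF₁c.integrable_of_hasCompactSupport hF₁s
  have hiF₂ : Integrable F₂ := hF₂c.integrable_of_hasCompactSupport hF₂s
  -- drop the restriction to Omega0
  have e₁ : ∫ y in Omega0 ω, F₁ y = ∫ y, F₁ y := by
    apply setIntegral_eq_integral_of_forall_compl_eq_zero
    intro x hx
    have : v x = 0 := image_eq_zero_of_notMem_tsupport (fun hmem => hx (hsub hmem))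
    simp [hF₁, this]
  have e₂ : ∫ y in Omega0 ω, F₂ y = ∫ y, F₂ y := by
    apply setIntegral_eq_integral_of_forall_compl_eq_zero
    intro x hx
    have : pd1 v x = 0 := hpd0 x (fun hmem => hx (hsub hmem))
    simp [hF₂, this]
  rw [show (∫ y in Omega0 ω, y.1 ^ 2 * ‖v y‖ ^ 2 * Real.exp (y.1 ^ 2 / 4)) =
      ∫ y in Omega0 ω, F₁ y from rfl,
    show (∫ y in Omega0 ω, ‖pd1 v y‖ ^ 2 * Real.exp (y.1 ^ 2 / 4)) =
      ∫ y in Omega0 ω, F₂ y from rfl, e₁, e₂]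
  -- Fubini: reduce to the 1D inequality on each line
  have fub : ∀ (F : ℝ × ℝ × ℝ → ℝ), Integrable F →
      ∫ y, F y = ∫ z : ℝ × ℝ, ∫ t : ℝ, F (t, z) := by
    intro F hF
    rw [MeasureTheory.Measure.volume_eq_prod] at hF ⊢
    rw [← MeasureTheory.integral_prod_swap]
    exact MeasureTheory.integral_prod _ hF.swap
  rw [fub F₁ hiF₁, fub F₂ hiF₂, ← MeasureTheory.integral_const_mul]
  have hiz₁ : Integrable fun z : ℝ × ℝ => ∫ t : ℝ, F₁ (t, z) := by
    have := (MeasureTheory.Measure.volume_eq_prod ℝ (ℝ × ℝ)) ▸ hiF₁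
    exact this.swap.integral_prod_left
  have hiz₂ : Integrable fun z : ℝ × ℝ => (16:ℝ) * ∫ t : ℝ, F₂ (t, z) := by
    have := (MeasureTheory.Measure.volume_eq_prod ℝ (ℝ × ℝ)) ▸ hiF₂
    exact this.swap.integral_prod_left.const_mul 16
  apply integral_mono hiz₁ hiz₂
  intro z
  -- the 1D inequality for g t = v (t, z)
  set g : ℝ → ℂ := fun t => v (t, z.1, z.2) with hgdef
  have hgc : ContDiff ℝ (⊤ : ℕ∞) g := hsm.comp (contDiff_id.prodMk contDiff_const)
  have hgs : HasCompactSupport g := by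
    have hiso : Isometry (fun t : ℝ => ((t, z.1, z.2) : ℝ × ℝ × ℝ)) := by
      apply Isometry.of_dist_eq
      intro a b
      simp [Prod.dist_eq, dist_self]
    exact hcs.comp_isClosedEmbedding hiso.isClosedEmbedding
  have hderiv : ∀ t : ℝ, deriv g t = pd1 v (t, z) := fun t => rfl
  have := oneD_bound g hgc hgs
  simp only [hderiv] at this
  exact this
end
end

section
/- Let θ ∈ C¹(ℝ) with bounded derivative θ̇ and let s₀ > 0. Then there exist ε > 0 and C ≥ 0 such that for every s ∈ [0,s₀] and every real-valued v ∈ C_c^∞(Ω₀): ∫_{Ω₀} K(y₁) [ |∂₁v − σ_s(y₁)∂_τv|² + e^s |∇'v|² − E₁ e^s v² − (1/4) v² − (1/2) y₁ σ_s(y₁) v ∂_τv ] dy ≥ ε ∫_{Ω₀} K(y₁) ( v² + |∇v|² ) dy − C ∫_{Ω₀} K(y₁) v² dy. (This is the coercivity of the real part of the time-dependent sesquilinear form a_s in the weighted space 𝓗₁, needed to apply Lions' theorem.) -/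
open MeasureTheory Real Set Filter

noncomputable section

/-- σ_s(y₁) = e^{s/2} θ̇(e^{s/2} y₁). -/
def sigmafun (θ : ℝ → ℝ) (s y₁ : ℝ) : ℝ :=
  Real.exp (s / 2) * deriv θ (Real.exp (s / 2) * y₁)

section Helpers
variable {v : ℝ × ℝ × ℝ → ℝ}

lemma pd1_hasDerivAt (hv : Differentiable ℝ v) (a b c : ℝ) :
    HasDerivAt (fun t => v (t, b, c)) (pd1 v (a, b, c)) a := by
  have hd : DifferentiableAt ℝ (fun t => v (t, b, c)) a :=
    ((hv ((a : ℝ), b, c)).comp a ((differentiableAt_fun_id.prodMk (differentiableAt_const (b, c)))))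
  exact hd.hasDerivAt

lemma pd2_hasDerivAt (hv : Differentiable ℝ v) (a b c : ℝ) :
    HasDerivAt (fun t => v (a, t, c)) (pd2 v (a, b, c)) b := by
  have hd : DifferentiableAt ℝ (fun t => v (a, t, c)) b :=
    ((hv ((a : ℝ), b, c)).comp b ((differentiableAt_const a).prodMk
      (differentiableAt_fun_id.prodMk (differentiableAt_const c))))
  exact hd.hasDerivAt

lemma pd3_hasDerivAt (hv : Differentiable ℝ v) (a b c : ℝ) :
    HasDerivAt (fun t => v (a, b, t)) (pd3 v (a, b, c)) c := by
  have hd : DifferentiableAt ℝ (fun t => v (a, b, t)) c :=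
    ((hv ((a : ℝ), b, c)).comp c ((differentiableAt_const a).prodMk
      ((differentiableAt_const b).prodMk differentiableAt_fun_id)))
  exact hd.hasDerivAt

lemma pd1_eq_fderiv (hv : Differentiable ℝ v) (x : ℝ × ℝ × ℝ) :
    pd1 v x = fderiv ℝ v x (1, 0, 0) := by
  have hι : HasDerivAt (fun t : ℝ => ((t, x.2.1, x.2.2) : ℝ × ℝ × ℝ)) (1, 0, 0) x.1 :=
    (hasDerivAt_id x.1).prodMk (hasDerivAt_const _ _)
  have := ((hv x).hasFDerivAt.comp_hasDerivAt x.1 hι)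
  exact this.deriv

lemma pd2_eq_fderiv (hv : Differentiable ℝ v) (x : ℝ × ℝ × ℝ) :
    pd2 v x = fderiv ℝ v x (0, 1, 0) := by
  have hι : HasDerivAt (fun t : ℝ => ((x.1, t, x.2.2) : ℝ × ℝ × ℝ)) (0, 1, 0) x.2.1 :=
    (hasDerivAt_const _ _).prodMk ((hasDerivAt_id _).prodMk (hasDerivAt_const _ _))
  have := ((hv x).hasFDerivAt.comp_hasDerivAt x.2.1 hι)
  exact this.deriv

lemma pd3_eq_fderiv (hv : Differentiable ℝ v) (x : ℝ × ℝ × ℝ) :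
    pd3 v x = fderiv ℝ v x (0, 0, 1) := by
  have hι : HasDerivAt (fun t : ℝ => ((x.1, x.2.1, t) : ℝ × ℝ × ℝ)) (0, 0, 1) x.2.2 :=
    (hasDerivAt_const _ _).prodMk ((hasDerivAt_const _ _).prodMk (hasDerivAt_id _))
  have := ((hv x).hasFDerivAt.comp_hasDerivAt x.2.2 hι)
  exact this.deriv

lemma pd1_continuous (hv : ContDiff ℝ (⊤ : ℕ∞) v) : Continuous (pd1 v) := by
  have : pd1 v = fun x => fderiv ℝ v x (1, 0, 0) :=
    funext fun x => pd1_eq_fderiv (hv.differentiable (by simp)) x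
  rw [this]
  exact (hv.continuous_fderiv (by simp)).clm_apply continuous_const

lemma pd2_continuous (hv : ContDiff ℝ (⊤ : ℕ∞) v) : Continuous (pd2 v) := by
  have : pd2 v = fun x => fderiv ℝ v x (0, 1, 0) :=
    funext fun x => pd2_eq_fderiv (hv.differentiable (by simp)) x
  rw [this]
  exact (hv.continuous_fderiv (by simp)).clm_apply continuous_const

lemma pd3_continuous (hv : ContDiff ℝ (⊤ : ℕ∞) v) : Continuous (pd3 v) := by
  have : pd3 v = fun x => fderiv ℝ v x (0, 0, 1) :=
    funext fun x => pd3_eq_fderiv (hv.differentiable (by simp)) x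
  rw [this]
  exact (hv.continuous_fderiv (by simp)).clm_apply continuous_const

lemma pd1_zero {x : ℝ × ℝ × ℝ} (hx : x ∉ tsupport v) : pd1 v x = 0 := by
  have h0 : v =ᶠ[nhds x] 0 := notMem_tsupport_iff_eventuallyEq.1 hx
  have hι : ContinuousAt (fun t : ℝ => ((t, x.2.1, x.2.2) : ℝ × ℝ × ℝ)) x.1 := by fun_prop
  have h1 : (fun t : ℝ => v (t, x.2.1, x.2.2)) =ᶠ[nhds x.1] (fun _ => (0 : ℝ)) :=
    hι.tendsto.eventually h0
  calc pd1 v x = deriv (fun _ : ℝ => (0:ℝ)) x.1 := h1.deriv_eq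
  _ = 0 := deriv_const _ _

lemma pd2_zero {x : ℝ × ℝ × ℝ} (hx : x ∉ tsupport v) : pd2 v x = 0 := by
  have h0 : v =ᶠ[nhds x] 0 := notMem_tsupport_iff_eventuallyEq.1 hx
  have hι : ContinuousAt (fun t : ℝ => ((x.1, t, x.2.2) : ℝ × ℝ × ℝ)) x.2.1 := by fun_prop
  have h1 : (fun t : ℝ => v (x.1, t, x.2.2)) =ᶠ[nhds x.2.1] (fun _ => (0 : ℝ)) :=
    hι.tendsto.eventually h0
  calc pd2 v x = deriv (fun _ : ℝ => (0:ℝ)) x.2.1 := h1.deriv_eq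
  _ = 0 := deriv_const _ _

lemma pd3_zero {x : ℝ × ℝ × ℝ} (hx : x ∉ tsupport v) : pd3 v x = 0 := by
  have h0 : v =ᶠ[nhds x] 0 := notMem_tsupport_iff_eventuallyEq.1 hx
  have hι : ContinuousAt (fun t : ℝ => ((x.1, x.2.1, t) : ℝ × ℝ × ℝ)) x.2.2 := by fun_prop
  have h1 : (fun t : ℝ => v (x.1, x.2.1, t)) =ᶠ[nhds x.2.2] (fun _ => (0 : ℝ)) :=
    hι.tendsto.eventually h0
  calc pd3 v x = deriv (fun _ : ℝ => (0:ℝ)) x.2.2 := h1.deriv_eq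
  _ = 0 := deriv_const _ _

lemma integrable_aux (hc : HasCompactSupport v) (f : ℝ × ℝ × ℝ → ℝ)
    (hf : Continuous f) (h0 : ∀ x ∉ tsupport v, f x = 0) : Integrable f volume := by
  apply hf.integrable_of_hasCompactSupport
  apply hc.mono'
  intro x hx
  by_contra hxx
  exact hx (h0 x hxx)

lemma integral_deriv_zero (f f' : ℝ → ℝ) (h : ∀ t, HasDerivAt f (f' t) t)
    (hf' : Continuous f') (hcs : HasCompactSupport f) : (∫ t : ℝ, f' t) = 0 := by
  obtain ⟨r, hr⟩ := hcs.isBounded.subset_closedBall 0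
  set R := max r 0 + 1 with hR
  have hRpos : 0 < R := by positivity
  have hsub : tsupport f ⊆ Metric.closedBall 0 (max r 0) :=
    hr.trans (Metric.closedBall_subset_closedBall (le_max_left _ _))
  have hout : ∀ x : ℝ, x ∉ Set.Ioc (-R) R → f' x = 0 := by
    intro x hx
    have hxn : x ∉ tsupport f := by
      intro hmem
      have := hsub hmem
      rw [Real.closedBall_eq_Icc] at this
      simp only [Set.mem_Icc, zero_sub, zero_add] at this
      apply hx
      constructor
      · linarith [this.1]
      · linarith [this.2]
    have h0 : f =ᶠ[nhds x] 0 := notMem_tsupport_iff_eventuallyEq.1 hxn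
    have : deriv f x = deriv (fun _ : ℝ => (0:ℝ)) x := h0.deriv_eq
    rw [deriv_const] at this
    rw [← (h x).deriv]
    exact this
  have hfR : f R = 0 := by
    apply image_eq_zero_of_notMem_tsupport
    intro hmem
    have := hsub hmem
    rw [Real.closedBall_eq_Icc] at this
    simp only [Set.mem_Icc, zero_sub, zero_add] at this
    linarith [this.2, le_max_right r 0]
  have hfmR : f (-R) = 0 := by
    apply image_eq_zero_of_notMem_tsupport
    intro hmem
    have := hsub hmem
    rw [Real.closedBall_eq_Icc] at this
    simp only [Set.mem_Icc, zero_sub, zero_add] at this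
    linarith [this.1]
  have h1 : (∫ t : ℝ, f' t) = ∫ t in Set.Ioc (-R) R, f' t :=
    (setIntegral_eq_integral_of_forall_compl_eq_zero hout).symm
  rw [h1, ← intervalIntegral.integral_of_le (by linarith : -R ≤ R)]
  rw [intervalIntegral.integral_eq_sub_of_hasDerivAt (fun x _ => h x)
    (hf'.intervalIntegrable _ _)]
  rw [hfR, hfmR, sub_zero]

lemma key_ibp (hv : ContDiff ℝ (⊤ : ℕ∞) v) (hc : HasCompactSupport v) :
    (∫ y : ℝ × ℝ × ℝ, Real.exp (y.1^2/4) *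
      ((1/4)*(v y)^2 + (y.1^2/8)*(v y)^2 + (y.1/2)*(v y)*(pd1 v y))) = 0 := by
  have hp1 : Continuous (pd1 v) := pd1_continuous hv
  set D : ℝ × ℝ × ℝ → ℝ := fun y => Real.exp (y.1^2/4) *
      ((1/4)*(v y)^2 + (y.1^2/8)*(v y)^2 + (y.1/2)*(v y)*(pd1 v y)) with hD
  have hDc : Continuous D := by
    apply Continuous.mul
    · fun_prop
    · have := hv.continuous
      fun_prop
  have hDint : Integrable D volume := by
    apply integrable_aux hc D hDc
    intro x hx
    have h0 : v x = 0 := image_eq_zero_of_notMem_tsupport hx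
    simp [hD, h0]
  have h1 : ∀ b c : ℝ, (∫ t : ℝ, D (t, b, c)) = 0 := by
    intro b c
    set F : ℝ → ℝ := fun t => (t/4) * Real.exp (t^2/4) * (v (t,b,c))^2 with hF
    have hder : ∀ t : ℝ, HasDerivAt F (D (t,b,c)) t := by
      intro t
      have hv1 := pd1_hasDerivAt (hv.differentiable (by simp)) t b c
      have hsq : HasDerivAt (fun t : ℝ => (v (t,b,c))^2)
          (2 * (v (t,b,c)) * pd1 v (t,b,c)) t := by
        have := hv1.fun_pow 2
        simpa using this
      have hexp : HasDerivAt (fun t : ℝ => Real.exp (t^2/4)) ((t/2) * Real.exp (t^2/4)) t := by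
        have hpow : HasDerivAt (fun t : ℝ => t^2/4) (t/2) t := by
          have := (hasDerivAt_pow 2 t).div_const 4
          exact this.congr_deriv (by norm_num; ring)
        simpa [mul_comm] using hpow.exp
      have hlin : HasDerivAt (fun t : ℝ => t/4) (1/4) t := by
        simpa using (hasDerivAt_id t).div_const 4
      have : HasDerivAt F _ t := ((hlin.fun_mul hexp).fun_mul hsq)
      convert this using 1
      show Real.exp (t^2/4) * _ = _
      ring
    have hFc : HasCompactSupport F := by
      apply HasCompactSupport.intro (hc.image continuous_fst)
      intro t ht
      have : v (t,b,c) = 0 := by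
        apply image_eq_zero_of_notMem_tsupport
        intro hmem
        exact ht ⟨(t,b,c), hmem, rfl⟩
      simp [hF, this]
    exact integral_deriv_zero F _ hder (by fun_prop) hFc
  have hswap : (∫ y : ℝ × ℝ × ℝ, D y) = ∫ y' : ℝ × ℝ, ∫ t : ℝ, D (t, y') := by
    rw [MeasureTheory.Measure.volume_eq_prod]
    rw [MeasureTheory.Measure.volume_eq_prod] at hDint
    rw [MeasureTheory.integral_prod _ hDint]
    exact MeasureTheory.integral_integral_swap hDint
  rw [hswap]
  have : ∀ y' : ℝ × ℝ, (∫ t : ℝ, D (t, y')) = 0 := fun y' => h1 y'.1 y'.2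
  simp [this]

end Helpers


lemma coercivity_arith (η c es Ev A B N t w p1 : ℝ) (hη0 : 0 < η) (hη1 : η ≤ 1)
    (hN : 0 ≤ N) (hp1 : p1 = A + B - t/4*w)
    (hηB : η*B^2 ≤ (1/2)*N) (hE : Ev*es*w^2 ≤ c*w^2) (hes : N ≤ es*N) :
    η/6*(w^2+(p1^2+N)) - (c+η/6)*w^2 ≤ A^2 + t^2/16*w^2 + es*N - Ev*es*w^2 := by
  have h3a : p1^2 ≤ 3*A^2 + 3*B^2 + 3*(t^2/16*w^2) := by
    rw [hp1]
    nlinarith [sq_nonneg (A-B), sq_nonneg (A+t/4*w), sq_nonneg (B+t/4*w)]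
  have f1 : η*p1^2 ≤ 3*(η*A^2) + 3*(η*B^2) + 3*(η*(t^2/16*w^2)) := by
    nlinarith [mul_le_mul_of_nonneg_left h3a hη0.le]
  have f4 : 0 ≤ (1-η)*(A^2 + t^2/16*w^2) :=
    mul_nonneg (by linarith) (by positivity)
  have f7 : 0 ≤ η*p1^2 := by positivity
  have f8 : η*N ≤ N := by nlinarith
  nlinarith [f1, f4, f7, f8, hηB, hE, hes, hN]

set_option maxHeartbeats 2000000 in
/-- coercivity of the real part of the time-dependent form a_s in the
weighted space 𝓗₁ = L²(Ω₀, K(y₁)dy), K(y₁) = e^{y₁²/4}: there are ε > 0 and C ≥ 0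
such that for all s ∈ [0,s₀] and all real-valued v ∈ C_c^∞(Ω₀),
Re a_s[v] ≥ ε ∫K(v² + |∇v|²) − C ∫K v². -/
theorem coercivity_weighted_form
    (ω : Set (ℝ × ℝ)) (hω_open : IsOpen ω) (hω_bdd : Bornology.IsBounded ω)
    (hω_conn : IsConnected ω)
    (θ : ℝ → ℝ) (hθ : ContDiff ℝ 1 θ) (hθ' : ∃ M : ℝ, ∀ t : ℝ, |deriv θ t| ≤ M)
    (s₀ : ℝ) (hs₀ : 0 < s₀) :
    ∃ ε : ℝ, 0 < ε ∧ ∃ C : ℝ, 0 ≤ C ∧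
      ∀ s ∈ Set.Icc (0 : ℝ) s₀, ∀ v : ℝ × ℝ × ℝ → ℝ, IsTest3 (Omega0 ω) v →
        ε * (∫ y in Omega0 ω, Real.exp (y.1 ^ 2 / 4) *
              ((v y) ^ 2 + ((pd1 v y) ^ 2 + (pd2 v y) ^ 2 + (pd3 v y) ^ 2)))
          - C * (∫ y in Omega0 ω, Real.exp (y.1 ^ 2 / 4) * (v y) ^ 2)
        ≤ ∫ y in Omega0 ω, Real.exp (y.1 ^ 2 / 4) *
            ((pd1 v y - sigmafun θ s y.1 * pdtau v y) ^ 2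
              + Real.exp s * ((pd2 v y) ^ 2 + (pd3 v y) ^ 2)
              - E1 ω * Real.exp s * (v y) ^ 2
              - (1 / 4) * (v y) ^ 2
              - (1 / 2) * y.1 * sigmafun θ s y.1 * (v y) * pdtau v y) := by
  classical
  obtain ⟨M₀, hM₀⟩ := hθ'
  set M : ℝ := max M₀ 0 with hMdef
  have hM : ∀ t : ℝ, |deriv θ t| ≤ M := fun t => (hM₀ t).trans (le_max_left _ _)
  have hMnn : (0:ℝ) ≤ M := le_max_right _ _
  obtain ⟨R₀, hR₀⟩ := hω_bdd.subset_closedBall 0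
  set R : ℝ := max R₀ 0 with hRdef
  have hR : ω ⊆ Metric.closedBall 0 R :=
    hR₀.trans (Metric.closedBall_subset_closedBall (le_max_left _ _))
  have hRnn : (0:ℝ) ≤ R := le_max_right _ _
  set S : ℝ := Real.exp (s₀/2) * M with hSdef
  have hSnn : 0 ≤ S := by positivity
  set η : ℝ := 1/(4*S^2*R^2+1) with hηdef
  have hden : (0:ℝ) < 4*S^2*R^2+1 := by positivity
  have hη0 : 0 < η := by rw [hηdef]; positivity
  have hηden : η * (4*S^2*R^2+1) = 1 := by
    rw [hηdef]; field_simp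
  have hη1 : η ≤ 1 := by nlinarith [sq_nonneg (S*R), hη0]
  have hη2 : 2*η*S^2*R^2 ≤ 1/2 := by nlinarith [hη0]
  set c : ℝ := max (E1 ω) 0 * Real.exp s₀ with hcdef
  have hcnn : 0 ≤ c := by
    rw [hcdef]; positivity
  have hε0 : (0:ℝ) < η/6 := by positivity
  refine ⟨η/6, hε0, c + η/6, by positivity, ?_⟩
  intro s hs v hvt
  obtain ⟨hv, hcs, hsupp⟩ := hvt
  have hdv : Differentiable ℝ v := hv.differentiable (by simp)
  have hvc : Continuous v := hv.continuous
  have hp1c : Continuous (pd1 v) := pd1_continuous hv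
  have hp2c : Continuous (pd2 v) := pd2_continuous hv
  have hp3c : Continuous (pd3 v) := pd3_continuous hv
  have hτc : Continuous (pdtau v) := by
    unfold pdtau
    exact ((continuous_snd.snd).smul hp2c).sub ((continuous_snd.fst).smul hp3c)
  have hθc : Continuous (deriv θ) := hθ.continuous_deriv le_rfl
  have hσc : Continuous (fun y : ℝ × ℝ × ℝ => sigmafun θ s y.1) := by
    unfold sigmafun; fun_prop
  have hz : ∀ x : ℝ × ℝ × ℝ, x ∉ tsupport v →
      v x = 0 ∧ pd1 v x = 0 ∧ pd2 v x = 0 ∧ pd3 v x = 0 ∧ pdtau v x = 0 := by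
    intro x hx
    have h0 := image_eq_zero_of_notMem_tsupport hx
    have h1 := pd1_zero hx
    have h2 := pd2_zero hx
    have h3 := pd3_zero hx
    exact ⟨h0, h1, h2, h3, by simp [pdtau, h2, h3]⟩
  have hzΩ : ∀ x : ℝ × ℝ × ℝ, x ∉ Omega0 ω →
      v x = 0 ∧ pd1 v x = 0 ∧ pd2 v x = 0 ∧ pd3 v x = 0 ∧ pdtau v x = 0 :=
    fun x hx => hz x (fun hmem => hx (hsupp hmem))
  -- set integrals to full integrals
  have e1 : (∫ y in Omega0 ω, Real.exp (y.1 ^ 2 / 4) *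
        ((v y) ^ 2 + ((pd1 v y) ^ 2 + (pd2 v y) ^ 2 + (pd3 v y) ^ 2)))
      = ∫ y : ℝ × ℝ × ℝ, Real.exp (y.1 ^ 2 / 4) *
        ((v y) ^ 2 + ((pd1 v y) ^ 2 + (pd2 v y) ^ 2 + (pd3 v y) ^ 2)) :=
    setIntegral_eq_integral_of_forall_compl_eq_zero (fun x hx => by
      obtain ⟨h0, h1, h2, h3, h4⟩ := hzΩ x hx; simp [h0, h1, h2, h3])
  have e2 : (∫ y in Omega0 ω, Real.exp (y.1 ^ 2 / 4) * (v y) ^ 2)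
      = ∫ y : ℝ × ℝ × ℝ, Real.exp (y.1 ^ 2 / 4) * (v y) ^ 2 :=
    setIntegral_eq_integral_of_forall_compl_eq_zero (fun x hx => by
      obtain ⟨h0, h1, h2, h3, h4⟩ := hzΩ x hx; simp [h0])
  have e3 : (∫ y in Omega0 ω, Real.exp (y.1 ^ 2 / 4) *
        ((pd1 v y - sigmafun θ s y.1 * pdtau v y) ^ 2
          + Real.exp s * ((pd2 v y) ^ 2 + (pd3 v y) ^ 2)
          - E1 ω * Real.exp s * (v y) ^ 2
          - (1 / 4) * (v y) ^ 2
          - (1 / 2) * y.1 * sigmafun θ s y.1 * (v y) * pdtau v y))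
      = ∫ y : ℝ × ℝ × ℝ, Real.exp (y.1 ^ 2 / 4) *
        ((pd1 v y - sigmafun θ s y.1 * pdtau v y) ^ 2
          + Real.exp s * ((pd2 v y) ^ 2 + (pd3 v y) ^ 2)
          - E1 ω * Real.exp s * (v y) ^ 2
          - (1 / 4) * (v y) ^ 2
          - (1 / 2) * y.1 * sigmafun θ s y.1 * (v y) * pdtau v y) :=
    setIntegral_eq_integral_of_forall_compl_eq_zero (fun x hx => by
      obtain ⟨h0, h1, h2, h3, h4⟩ := hzΩ x hx; simp [h0, h1, h2, h3, h4])
  rw [e1, e2, e3]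
  -- integrability
  have IL : Integrable (fun y : ℝ × ℝ × ℝ => Real.exp (y.1 ^ 2 / 4) *
      ((v y) ^ 2 + ((pd1 v y) ^ 2 + (pd2 v y) ^ 2 + (pd3 v y) ^ 2))) volume :=
    integrable_aux hcs _ (by fun_prop) (fun x hx => by
      obtain ⟨h0, h1, h2, h3, h4⟩ := hz x hx; simp [h0, h1, h2, h3])
  have Iv : Integrable (fun y : ℝ × ℝ × ℝ => Real.exp (y.1 ^ 2 / 4) * (v y) ^ 2) volume :=
    integrable_aux hcs _ (by fun_prop) (fun x hx => by
      obtain ⟨h0, h1, h2, h3, h4⟩ := hz x hx; simp [h0])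
  have IP : Integrable (fun y : ℝ × ℝ × ℝ => Real.exp (y.1 ^ 2 / 4) *
      ((pd1 v y - sigmafun θ s y.1 * pdtau v y + y.1/4 * v y) ^ 2
        + y.1^2/16 * (v y) ^ 2
        + Real.exp s * ((pd2 v y) ^ 2 + (pd3 v y) ^ 2)
        - E1 ω * Real.exp s * (v y) ^ 2)) volume :=
    integrable_aux hcs _ (by fun_prop) (fun x hx => by
      obtain ⟨h0, h1, h2, h3, h4⟩ := hz x hx; simp [h0, h1, h2, h3, h4])
  have ID : Integrable (fun y : ℝ × ℝ × ℝ => Real.exp (y.1 ^ 2 / 4) *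
      ((1/4) * (v y) ^ 2 + (y.1^2/8) * (v y) ^ 2 + (y.1/2) * (v y) * (pd1 v y))) volume :=
    integrable_aux hcs _ (by fun_prop) (fun x hx => by
      obtain ⟨h0, h1, h2, h3, h4⟩ := hz x hx; simp [h0])
  -- rewrite RHS using the integration by parts identity
  have hsplit : (∫ y : ℝ × ℝ × ℝ, Real.exp (y.1 ^ 2 / 4) *
        ((pd1 v y - sigmafun θ s y.1 * pdtau v y) ^ 2
          + Real.exp s * ((pd2 v y) ^ 2 + (pd3 v y) ^ 2)
          - E1 ω * Real.exp s * (v y) ^ 2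
          - (1 / 4) * (v y) ^ 2
          - (1 / 2) * y.1 * sigmafun θ s y.1 * (v y) * pdtau v y))
      = (∫ y : ℝ × ℝ × ℝ, Real.exp (y.1 ^ 2 / 4) *
        ((pd1 v y - sigmafun θ s y.1 * pdtau v y + y.1/4 * v y) ^ 2
          + y.1^2/16 * (v y) ^ 2
          + Real.exp s * ((pd2 v y) ^ 2 + (pd3 v y) ^ 2)
          - E1 ω * Real.exp s * (v y) ^ 2))
        - ∫ y : ℝ × ℝ × ℝ, Real.exp (y.1 ^ 2 / 4) *
            ((1/4) * (v y) ^ 2 + (y.1^2/8) * (v y) ^ 2 + (y.1/2) * (v y) * (pd1 v y)) := by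
    rw [← integral_sub IP ID]
    congr 1
    funext y
    ring
  rw [hsplit, key_ibp hv hcs, sub_zero]
  have hmono : (∫ y : ℝ × ℝ × ℝ, (η/6 * (Real.exp (y.1 ^ 2 / 4) *
        ((v y) ^ 2 + ((pd1 v y) ^ 2 + (pd2 v y) ^ 2 + (pd3 v y) ^ 2)))
      - (c + η/6) * (Real.exp (y.1 ^ 2 / 4) * (v y) ^ 2)))
      ≤ ∫ y : ℝ × ℝ × ℝ, Real.exp (y.1 ^ 2 / 4) *
        ((pd1 v y - sigmafun θ s y.1 * pdtau v y + y.1/4 * v y) ^ 2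
          + y.1^2/16 * (v y) ^ 2
          + Real.exp s * ((pd2 v y) ^ 2 + (pd3 v y) ^ 2)
          - E1 ω * Real.exp s * (v y) ^ 2) := by
    apply integral_mono ((IL.const_mul _).sub (Iv.const_mul _)) IP
    intro y
    simp only [Pi.sub_apply]
    by_cases hy : y ∈ tsupport v
    · -- main pointwise estimate
      have hyΩ : y ∈ Omega0 ω := hsupp hy
      have hyω : y.2 ∈ ω := hyΩ
      have hynorm : ‖y.2‖ ≤ R := by
        have := hR hyω
        simpa [Metric.mem_closedBall, dist_zero_right] using this
      have hy2a : |y.2.1| ≤ R := by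
        have h := (norm_fst_le y.2).trans hynorm
        simpa [Real.norm_eq_abs] using h
      have hy3a : |y.2.2| ≤ R := by
        have h := (norm_snd_le y.2).trans hynorm
        simpa [Real.norm_eq_abs] using h
      have hy2sq : y.2.1^2 ≤ R^2 := by
        rw [← sq_abs y.2.1]
        exact pow_le_pow_left₀ (abs_nonneg _) hy2a 2
      have hy3sq : y.2.2^2 ≤ R^2 := by
        rw [← sq_abs y.2.2]
        exact pow_le_pow_left₀ (abs_nonneg _) hy3a 2
      have hσ : |sigmafun θ s y.1| ≤ S := by
        rw [hSdef]
        unfold sigmafun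
        rw [abs_mul, abs_of_pos (Real.exp_pos _)]
        exact mul_le_mul (Real.exp_le_exp.2 (by linarith [hs.2])) (hM _)
          (abs_nonneg _) (Real.exp_pos _).le
      have hσ2 : (sigmafun θ s y.1)^2 ≤ S^2 := by
        rw [← sq_abs (sigmafun θ s y.1)]
        exact pow_le_pow_left₀ (abs_nonneg _) hσ 2
      have hes1 : 1 ≤ Real.exp s := Real.one_le_exp hs.1
      have hτω : pdtau v y = y.2.2 * pd2 v y - y.2.1 * pd3 v y := by
        simp [pdtau, smul_eq_mul]
      have hτ2 : (pdtau v y)^2 ≤ 2*R^2*((pd2 v y)^2 + (pd3 v y)^2) := by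
        rw [hτω]
        nlinarith [sq_nonneg (y.2.2 * pd2 v y + y.2.1 * pd3 v y),
          mul_le_mul_of_nonneg_right hy2sq (sq_nonneg (pd3 v y)),
          mul_le_mul_of_nonneg_right hy3sq (sq_nonneg (pd2 v y))]
      have hστ : (sigmafun θ s y.1)^2 * (pdtau v y)^2
          ≤ 2*S^2*R^2*((pd2 v y)^2 + (pd3 v y)^2) := by
        calc (sigmafun θ s y.1)^2 * (pdtau v y)^2
            ≤ S^2 * (pdtau v y)^2 :=
              mul_le_mul_of_nonneg_right hσ2 (sq_nonneg _)
          _ ≤ S^2 * (2*R^2*((pd2 v y)^2 + (pd3 v y)^2)) :=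
              mul_le_mul_of_nonneg_left hτ2 (sq_nonneg _)
          _ = 2*S^2*R^2*((pd2 v y)^2 + (pd3 v y)^2) := by ring
      have hE : E1 ω * Real.exp s ≤ c := by
        rcases le_or_gt (E1 ω) 0 with h | h
        · exact (mul_nonpos_of_nonpos_of_nonneg h (Real.exp_pos s).le).trans hcnn
        · rw [hcdef]
          exact mul_le_mul (le_max_left _ _) (Real.exp_le_exp.2 hs.2)
            (Real.exp_pos _).le (le_max_right _ _)
      have hE' : E1 ω * Real.exp s * (v y)^2 ≤ c * (v y)^2 :=
        mul_le_mul_of_nonneg_right hE (sq_nonneg _)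
      have hN : (0:ℝ) ≤ (pd2 v y)^2 + (pd3 v y)^2 := by positivity
      have hesN : (pd2 v y)^2 + (pd3 v y)^2
          ≤ Real.exp s * ((pd2 v y)^2 + (pd3 v y)^2) :=
        le_mul_of_one_le_left hN hes1
      have hηB : η*(sigmafun θ s y.1 * pdtau v y)^2
          ≤ (1/2)*((pd2 v y)^2 + (pd3 v y)^2) := by
        calc η*(sigmafun θ s y.1 * pdtau v y)^2
            = η*((sigmafun θ s y.1)^2 * (pdtau v y)^2) := by ring
          _ ≤ η*(2*S^2*R^2*((pd2 v y)^2 + (pd3 v y)^2)) :=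
              mul_le_mul_of_nonneg_left hστ hη0.le
          _ = (2*η*S^2*R^2)*((pd2 v y)^2 + (pd3 v y)^2) := by ring
          _ ≤ (1/2)*((pd2 v y)^2 + (pd3 v y)^2) :=
              mul_le_mul_of_nonneg_right hη2 hN
      have key : η/6 * ((v y) ^ 2 + ((pd1 v y) ^ 2 + (pd2 v y) ^ 2 + (pd3 v y) ^ 2))
          - (c + η/6) * (v y) ^ 2
          ≤ (pd1 v y - sigmafun θ s y.1 * pdtau v y + y.1/4 * v y) ^ 2
            + y.1^2/16 * (v y) ^ 2
            + Real.exp s * ((pd2 v y) ^ 2 + (pd3 v y) ^ 2)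
            - E1 ω * Real.exp s * (v y) ^ 2 := by
        have h := coercivity_arith η c (Real.exp s) (E1 ω)
          (pd1 v y - sigmafun θ s y.1 * pdtau v y + y.1/4 * v y)
          (sigmafun θ s y.1 * pdtau v y)
          ((pd2 v y)^2 + (pd3 v y)^2) y.1 (v y) (pd1 v y)
          hη0 hη1 hN (by ring) hηB hE' hesN
        linarith [h]
      have hKpos : (0:ℝ) < Real.exp (y.1 ^ 2 / 4) := Real.exp_pos _
      calc η/6 * (Real.exp (y.1 ^ 2 / 4) *
            ((v y) ^ 2 + ((pd1 v y) ^ 2 + (pd2 v y) ^ 2 + (pd3 v y) ^ 2)))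
          - (c + η/6) * (Real.exp (y.1 ^ 2 / 4) * (v y) ^ 2)
          = Real.exp (y.1 ^ 2 / 4) *
            (η/6 * ((v y) ^ 2 + ((pd1 v y) ^ 2 + (pd2 v y) ^ 2 + (pd3 v y) ^ 2))
              - (c + η/6) * (v y) ^ 2) := by ring
        _ ≤ Real.exp (y.1 ^ 2 / 4) *
            ((pd1 v y - sigmafun θ s y.1 * pdtau v y + y.1/4 * v y) ^ 2
              + y.1^2/16 * (v y) ^ 2
              + Real.exp s * ((pd2 v y) ^ 2 + (pd3 v y) ^ 2)
              - E1 ω * Real.exp s * (v y) ^ 2) :=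
            mul_le_mul_of_nonneg_left key hKpos.le
    · obtain ⟨h0, h1, h2, h3, h4⟩ := hz y hy
      simp [h0, h1, h2, h3, h4]
  calc η/6 * (∫ y : ℝ × ℝ × ℝ, Real.exp (y.1 ^ 2 / 4) *
        ((v y) ^ 2 + ((pd1 v y) ^ 2 + (pd2 v y) ^ 2 + (pd3 v y) ^ 2)))
      - (c + η/6) * (∫ y : ℝ × ℝ × ℝ, Real.exp (y.1 ^ 2 / 4) * (v y) ^ 2)
      = ∫ y : ℝ × ℝ × ℝ, (η/6 * (Real.exp (y.1 ^ 2 / 4) *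
          ((v y) ^ 2 + ((pd1 v y) ^ 2 + (pd2 v y) ^ 2 + (pd3 v y) ^ 2)))
        - (c + η/6) * (Real.exp (y.1 ^ 2 / 4) * (v y) ^ 2)) := by
        rw [integral_sub (IL.const_mul _) (Iv.const_mul _),
          integral_const_mul, integral_const_mul]
    _ ≤ _ := hmono
end
end

section
/- Let 0 < c ≤ 1 and let a, b : [0,∞) → (0,∞) be differentiable functions satisfying a'(t) ≤ −2c·a(t)²/b(t) and b'(t) ≤ 2(1−c)·a(t) for all t ≥ 0. Then for every t ≥ 0: a(t) ≤ a(0)·(1 + 2(a(0)/b(0))·t)^{−c} and b(t) ≤ b(0)·(1 + 2(a(0)/b(0))·t)^{1−c}. -/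
/-!
With `q = c / (1 - c)` the logarithmic derivatives of `a` and `b ^ q` cancel, so `a * b ^ q` is
nonincreasing. Then `(b ^ (1 + q))' = (1 + q) b ^ q b' ≤ 2 a b ^ q` is bounded by a constant, so
`b ^ (1 + q)` grows at most linearly, which is the bound on `b` (for `c = 1`, `b` is simply
nonincreasing). Inserting the bound on `b` into `a' ≤ -2c a² / b` shows that `1 / a` grows at least
like `(1 + 2 (a 0 / b 0) t) ^ c / a 0`.
-/

open Real

theorem le_of_hasDerivAt_le_on_Ici {f g f' g' : ℝ → ℝ} {t₀ : ℝ}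
    (hf : ∀ t, t₀ ≤ t → HasDerivAt f (f' t) t) (hg : ∀ t, t₀ ≤ t → HasDerivAt g (g' t) t)
    (h₀ : f t₀ ≤ g t₀) (hle : ∀ t, t₀ ≤ t → f' t ≤ g' t) {t : ℝ} (ht : t₀ ≤ t) :
    f t ≤ g t :=
  image_le_of_deriv_right_le_deriv_boundary
    (fun x hx => (hf x hx.1).continuousAt.continuousWithinAt)
    (fun x hx => (hf x hx.1).hasDerivWithinAt) h₀
    (fun x hx => (hg x hx.1).continuousAt.continuousWithinAt)
    (fun x hx => (hg x hx.1).hasDerivWithinAt) (fun x hx => hle x hx.1) ⟨ht, le_rfl⟩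

section

variable {c q : ℝ} {a b a' b' : ℝ → ℝ}

theorem mul_rpow_le_initial (hq0 : 0 ≤ q) (hq : q * (1 - c) = c)
    (ha : ∀ t, 0 ≤ t → HasDerivAt a (a' t) t) (hb : ∀ t, 0 ≤ t → HasDerivAt b (b' t) t)
    (hapos : ∀ t, 0 ≤ t → 0 < a t) (hbpos : ∀ t, 0 ≤ t → 0 < b t)
    (hda : ∀ t, 0 ≤ t → a' t ≤ -2 * c * a t ^ 2 / b t)
    (hdb : ∀ t, 0 ≤ t → b' t ≤ 2 * (1 - c) * a t) {t : ℝ} (ht : 0 ≤ t) :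
    a t * b t ^ q ≤ a 0 * b 0 ^ q := by
  have hlog : log (a t) + q * log (b t) ≤ log (a 0) + q * log (b 0) := by
    refine le_of_hasDerivAt_le_on_Ici (f' := fun s => a' s / a s + q * (b' s / b s))
      (g' := fun _ => 0)
      (fun s hs => ((ha s hs).log (hapos s hs).ne').add
        (((hb s hs).log (hbpos s hs).ne').const_mul q))
      (fun s _ => hasDerivAt_const _ _) le_rfl (fun s hs => ?_) ht
    have hA := hapos s hs
    have hB := hbpos s hs
    have hdA : a' s / a s ≤ -2 * c * (a s / b s) := by
      rw [div_le_iff₀ hA]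
      calc a' s ≤ -2 * c * a s ^ 2 / b s := hda s hs
        _ = -2 * c * (a s / b s) * a s := by ring
    have hdB : b' s / b s ≤ 2 * (1 - c) * (a s / b s) := by
      rw [div_le_iff₀ hB]
      calc b' s ≤ 2 * (1 - c) * a s := hdb s hs
        _ = 2 * (1 - c) * (a s / b s) * b s := by field_simp
    calc a' s / a s + q * (b' s / b s)
        ≤ -2 * c * (a s / b s) + q * (2 * (1 - c) * (a s / b s)) := by gcongr
      _ = 0 := by linear_combination 2 * (a s / b s) * hq
  have hA := hapos t ht
  have hB := hbpos t ht
  have hA0 := hapos 0 le_rfl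
  have hB0 := hbpos 0 le_rfl
  rwa [← log_le_log_iff (by positivity) (by positivity), log_mul hA.ne' (by positivity),
    log_mul hA0.ne' (by positivity), log_rpow hB, log_rpow hB0]

theorem rpow_one_add_le_add_mul (hq0 : 0 ≤ q) (hq : q * (1 - c) = c)
    (hb : ∀ t, 0 ≤ t → HasDerivAt b (b' t) t) (hbpos : ∀ t, 0 ≤ t → 0 < b t)
    (hdb : ∀ t, 0 ≤ t → b' t ≤ 2 * (1 - c) * a t)
    (hinv : ∀ t, 0 ≤ t → a t * b t ^ q ≤ a 0 * b 0 ^ q) {t : ℝ} (ht : 0 ≤ t) :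
    b t ^ (1 + q) ≤ b 0 ^ (1 + q) + 2 * (a 0 * b 0 ^ q) * t := by
  refine le_of_hasDerivAt_le_on_Ici (f := fun s => b s ^ (1 + q))
    (g := fun s => b 0 ^ (1 + q) + 2 * (a 0 * b 0 ^ q) * s) (g' := fun _ => 2 * (a 0 * b 0 ^ q))
    (fun s hs => (hb s hs).rpow_const (Or.inl (hbpos s hs).ne'))
    (fun s _ => by simpa using ((hasDerivAt_id s).const_mul _).const_add (b 0 ^ (1 + q)))
    (by simp) (fun s hs => ?_) ht
  have hB := hbpos s hs
  have hdb' : b' s * (1 + q) ≤ 2 * a s := by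
    calc b' s * (1 + q) ≤ 2 * (1 - c) * a s * (1 + q) := by gcongr; exact hdb s hs
      _ = 2 * a s := by linear_combination 2 * a s * hq
  calc b' s * (1 + q) * b s ^ (1 + q - 1) = b' s * (1 + q) * b s ^ q := by ring_nf
    _ ≤ 2 * a s * b s ^ q := by gcongr
    _ = 2 * (a s * b s ^ q) := by ring
    _ ≤ 2 * (a 0 * b 0 ^ q) := by linarith [hinv s hs]

theorem le_mul_one_add_rpow_one_sub (hc0 : 0 ≤ c) (hc1 : c ≤ 1)
    (ha : ∀ t, 0 ≤ t → HasDerivAt a (a' t) t) (hb : ∀ t, 0 ≤ t → HasDerivAt b (b' t) t)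
    (hapos : ∀ t, 0 ≤ t → 0 < a t) (hbpos : ∀ t, 0 ≤ t → 0 < b t)
    (hda : ∀ t, 0 ≤ t → a' t ≤ -2 * c * a t ^ 2 / b t)
    (hdb : ∀ t, 0 ≤ t → b' t ≤ 2 * (1 - c) * a t) {t : ℝ} (ht : 0 ≤ t) :
    b t ≤ b 0 * (1 + 2 * (a 0 / b 0) * t) ^ (1 - c) := by
  rcases hc1.lt_or_eq with hc1 | rfl
  · have hB := hbpos t ht
    have hA0 := hapos 0 le_rfl
    have hB0 := hbpos 0 le_rfl
    have hP : 0 < 1 + 2 * (a 0 / b 0) * t := by positivity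
    set q := c / (1 - c)
    have hq : q * (1 - c) = c := div_mul_cancel₀ _ (sub_pos.2 hc1).ne'
    have hq0 : 0 ≤ q := div_nonneg hc0 (sub_pos.2 hc1).le
    have hexp : (1 + q) * (1 - c) = 1 := by linear_combination hq
    have hlin := rpow_one_add_le_add_mul hq0 hq hb hbpos hdb
      (fun s hs => mul_rpow_le_initial hq0 hq ha hb hapos hbpos hda hdb hs) ht
    have hsplit : b 0 ^ (1 + q) + 2 * (a 0 * b 0 ^ q) * t
        = b 0 ^ (1 + q) * (1 + 2 * (a 0 / b 0) * t) := by
      rw [rpow_add hB0, rpow_one]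
      field_simp
    calc b t = (b t ^ (1 + q)) ^ (1 - c) := by rw [← rpow_mul hB.le, hexp, rpow_one]
      _ ≤ (b 0 ^ (1 + q) * (1 + 2 * (a 0 / b 0) * t)) ^ (1 - c) := by
          rw [← hsplit]; gcongr
      _ = b 0 * (1 + 2 * (a 0 / b 0) * t) ^ (1 - c) := by
          rw [mul_rpow (by positivity) hP.le, ← rpow_mul hB0.le, hexp, rpow_one]
  · rw [sub_self, rpow_zero, mul_one]
    exact le_of_hasDerivAt_le_on_Ici hb (fun s _ => hasDerivAt_const s (b 0)) le_rfl
      (fun s hs => by simpa using hdb s hs) ht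

theorem le_mul_one_add_rpow_neg (hc0 : 0 ≤ c)
    (ha : ∀ t, 0 ≤ t → HasDerivAt a (a' t) t)
    (hapos : ∀ t, 0 ≤ t → 0 < a t) (hbpos : ∀ t, 0 ≤ t → 0 < b t)
    (hda : ∀ t, 0 ≤ t → a' t ≤ -2 * c * a t ^ 2 / b t)
    (hb_le : ∀ t, 0 ≤ t → b t ≤ b 0 * (1 + 2 * (a 0 / b 0) * t) ^ (1 - c))
    {t : ℝ} (ht : 0 ≤ t) :
    a t ≤ a 0 * (1 + 2 * (a 0 / b 0) * t) ^ (-c) := by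
  have hA0 := hapos 0 le_rfl
  have hB0 := hbpos 0 le_rfl
  have hP : ∀ s, 0 ≤ s → 0 < 1 + 2 * (a 0 / b 0) * s := fun s hs => by positivity
  have hinv : (1 + 2 * (a 0 / b 0) * t) ^ c / a 0 ≤ (a t)⁻¹ := by
    refine le_of_hasDerivAt_le_on_Ici
      (fun s hs => ((((hasDerivAt_id s).const_mul (2 * (a 0 / b 0))).const_add 1).rpow_const
        (Or.inl (hP s hs).ne')).div_const (a 0))
      (fun s hs => (ha s hs).inv (hapos s hs).ne') (by simp) (fun s hs => ?_) ht
    have hA := hapos s hs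
    have hB := hbpos s hs
    have hPs := hP s hs
    calc 2 * (a 0 / b 0) * 1 * c * (1 + 2 * (a 0 / b 0) * s) ^ (c - 1) / a 0
        = 2 * c / (b 0 * (1 + 2 * (a 0 / b 0) * s) ^ (1 - c)) := by
          rw [show c - 1 = -(1 - c) by ring, rpow_neg hPs.le]
          field_simp
      _ ≤ 2 * c / b s := by gcongr; exact hb_le s hs
      _ ≤ -a' s / a s ^ 2 := by
          rw [le_div_iff₀ (by positivity)]
          have := hda s hs
          rw [le_div_iff₀ hB] at this
          field_simp
          linarith
  have hPc : 0 < (1 + 2 * (a 0 / b 0) * t) ^ c := rpow_pos_of_pos (hP t ht) c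
  rw [rpow_neg (hP t ht).le, ← div_eq_mul_inv, ← inv_div]
  exact (le_inv_comm₀ (hapos t ht) (div_pos hPc hA0)).2 hinv

end

/-- integration of the system of differential inequalities
a' ≤ −2c a²/b, b' ≤ 2(1−c)a with 0 < c ≤ 1 and positive a, b on [0,∞) yields
a(t) ≤ a(0)(1 + 2(a(0)/b(0))t)^{−c} and b(t) ≤ b(0)(1 + 2(a(0)/b(0))t)^{1−c}. -/
theorem ode_system_decay (c : ℝ) (hc0 : 0 < c) (hc1 : c ≤ 1)
    (a b : ℝ → ℝ) (ha : Differentiable ℝ a) (hb : Differentiable ℝ b)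
    (hapos : ∀ t : ℝ, 0 ≤ t → 0 < a t) (hbpos : ∀ t : ℝ, 0 ≤ t → 0 < b t)
    (hda : ∀ t : ℝ, 0 ≤ t → deriv a t ≤ -2 * c * (a t) ^ 2 / b t)
    (hdb : ∀ t : ℝ, 0 ≤ t → deriv b t ≤ 2 * (1 - c) * a t) :
    ∀ t : ℝ, 0 ≤ t →
      a t ≤ a 0 * (1 + 2 * (a 0 / b 0) * t) ^ (-c) ∧
      b t ≤ b 0 * (1 + 2 * (a 0 / b 0) * t) ^ (1 - c) := by
  have ha' : ∀ t, 0 ≤ t → HasDerivAt a (deriv a t) t := fun t _ => (ha t).hasDerivAt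
  have hb' : ∀ t, 0 ≤ t → HasDerivAt b (deriv b t) t := fun t _ => (hb t).hasDerivAt
  have hb_le : ∀ t, 0 ≤ t → b t ≤ b 0 * (1 + 2 * (a 0 / b 0) * t) ^ (1 - c) :=
    fun t ht => le_mul_one_add_rpow_one_sub hc0.le hc1 ha' hb' hapos hbpos hda hdb ht
  exact fun t ht => ⟨le_mul_one_add_rpow_neg hc0.le ha' hapos hbpos hda hb_le ht, hb_le t ht⟩
end
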